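/- arXiv:1302.6562 — 10 statements merged into one kernel-verified Lean document; each statement's English description precedes it below -/
import Mathlib

section
/- Let l, m, n be natural numbers with l < m and l < n, and let x be a q-ary string of length m and y a q-ary string of length n. Then there exists a q-ary string z of length l that is a subsequence of both x and y if and only if there exists a q-ary string w of length m + n - l such that both x and y are subsequences of w. -/
/-!
A common subsequence `z` of `x` and `y` is merged into a common supersequence of length
`|x| + |y| - |z|` by splitting both strings at the letters of `z` and sharing those letters.
Conversely, walking through a common supersequence `w`, every letter of `w` is used by `x`, by `y`
or by both, so the letters used by both form a common subsequence of length at least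
`|x| + |y| - |w|`; truncating it gives length exactly `l`.
-/

namespace List

variable {α : Type*}

theorem exists_eq_append_cons_of_cons_sublist {a : α} {l l' : List α} (h : a :: l <+ l') :
    ∃ s t, l' = s ++ a :: t ∧ l <+ t := by
  obtain ⟨r₁, r₂, rfl, ha, hl⟩ := cons_sublist_iff.1 h
  obtain ⟨s, t, rfl⟩ := append_of_mem ha
  exact ⟨s, t ++ r₂, by simp, hl.trans (sublist_append_right t r₂)⟩

theorem exists_common_supersequence {x y z : List α} (hx : z <+ x) (hy : z <+ y) :
    ∃ w, x <+ w ∧ y <+ w ∧ w.length + z.length = x.length + y.length := by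
  induction z generalizing x y with
  | nil => exact ⟨x ++ y, sublist_append_left x y, sublist_append_right x y, by simp⟩
  | cons a z ih =>
    obtain ⟨x₁, x₂, rfl, hx₂⟩ := exists_eq_append_cons_of_cons_sublist hx
    obtain ⟨y₁, y₂, rfl, hy₂⟩ := exists_eq_append_cons_of_cons_sublist hy
    obtain ⟨w, hxw, hyw, hlen⟩ := ih hx₂ hy₂
    refine ⟨x₁ ++ (y₁ ++ a :: w), ?_, ?_, ?_⟩
    · exact (Sublist.refl x₁).append
        ((hxw.cons_cons a).trans (sublist_append_right y₁ (a :: w)))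
    · exact ((append_sublist_append_left y₁).2 (hyw.cons_cons a)).trans
        (sublist_append_right x₁ _)
    · simp only [length_append, length_cons] at hlen ⊢
      omega

theorem exists_common_subsequence {w x y : List α} (hx : x <+ w) (hy : y <+ w) :
    ∃ z, z <+ x ∧ z <+ y ∧ x.length + y.length ≤ w.length + z.length := by
  induction w generalizing x y with
  | nil => exact ⟨[], nil_sublist x, nil_sublist y, by simp_all⟩
  | cons a w ih =>
    cases hx with
    | cons _ hx =>
      obtain ⟨z, hzx, hzy, hlen⟩ := ih hx hy.tail
      refine ⟨z, hzx, hzy.trans y.tail_sublist, ?_⟩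
      simp only [length_tail, length_cons] at hlen ⊢
      omega
    | cons_cons _ hx =>
      cases hy with
      | cons _ hy =>
        obtain ⟨z, hzx, hzy, hlen⟩ := ih hx hy
        refine ⟨z, hzx.cons a, hzy, ?_⟩
        simp only [length_cons] at hlen ⊢
        omega
      | cons_cons _ hy =>
        obtain ⟨z, hzx, hzy, hlen⟩ := ih hx hy
        refine ⟨a :: z, hzx.cons_cons a, hzy.cons_cons a, ?_⟩
        simp only [length_cons] at hlen ⊢
        omega

end List

theorem stmt_0_general (q l m n : ℕ) (hlm : l < m)
    (x y : List (Fin q)) (hx : x.length = m) (hy : y.length = n) :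
    (∃ z : List (Fin q), z.length = l ∧ z.Sublist x ∧ z.Sublist y) ↔
      (∃ w : List (Fin q), w.length = m + n - l ∧ x.Sublist w ∧ y.Sublist w) := by
  constructor
  · rintro ⟨z, rfl, hzx, hzy⟩
    obtain ⟨w, hxw, hyw, hlen⟩ := List.exists_common_supersequence hzx hzy
    exact ⟨w, by omega, hxw, hyw⟩
  · rintro ⟨w, hwl, hxw, hyw⟩
    obtain ⟨z, hzx, hzy, hlen⟩ := List.exists_common_subsequence hxw hyw
    have hlz : l ≤ z.length := by omega
    exact ⟨z.take l, by simp [hlz], (z.take_sublist l).trans hzx, (z.take_sublist l).trans hzy⟩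

/-- For q-ary strings x of length m and y of length n with l < m and l < n,
there is a common subsequence z of length l iff there is a common supersequence w of
length m + n - l. -/
theorem stmt_0 (q l m n : ℕ) (hq : 2 ≤ q) (hlm : l < m) (hln : l < n)
    (x y : List (Fin q)) (hx : x.length = m) (hy : y.length = n) :
    (∃ z : List (Fin q), z.length = l ∧ z.Sublist x ∧ z.Sublist y) ↔
      (∃ w : List (Fin q), w.length = m + n - l ∧ x.Sublist w ∧ y.Sublist w) :=
  stmt_0_general q l m n hlm x y hx hy
end

section
/- Let a, b, n be natural numbers with a + b ≤ n, and let x and y be q-ary strings of length n. Then D_{a+b}(x) ∩ D_{a+b}(y) = ∅ if and only if S_{a,b}(x) ∩ S_{a,b}(y) = ∅. -/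
/-- `delSet q n s x` is D_s(x): the set of q-ary strings of length `n - s`
that are subsequences of `x`. -/
def delSet (q n s : ℕ) (x : List (Fin q)) : Set (List (Fin q)) :=
  {z | z.length = n - s ∧ z.Sublist x}

/-- `sSet q n a b x` is S_{a,b}(x): the set of q-ary strings `w` of length `n - a + b`
such that some q-ary string of length `n - a` is a subsequence of both `x` and `w`. -/
def sSet (q n a b : ℕ) (x : List (Fin q)) : Set (List (Fin q)) :=
  {w | w.length = n - a + b ∧ ∃ z : List (Fin q), z.length = n - a ∧ z.Sublist x ∧ z.Sublist w}

/-!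
A common subsequence `z` of `x` and `y` of length `n - a - b` extends inside `x` and `y` to
subsequences `u`, `v` of length `n - a`; merging `u` and `v` along `z` gives a common
supersequence of length `2(n - a) - (n - a - b) = n - a + b`, a common point of `S_{a,b}(x)` and
`S_{a,b}(y)`. Conversely, two subsequences `u`, `v` of length `n - a` of a string `w` of length
`n - a + b` overlap in a common subsequence of length at least `|u| + |v| - |w| = n - a - b`.
-/

namespace List.Sublist

variable {α : Type*}

theorem exists_length_eq_between {z x : List α} (hz : z <+ x) {m : ℕ}
    (hzm : z.length ≤ m) (hmx : m ≤ x.length) :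
    ∃ y : List α, y.length = m ∧ z <+ y ∧ y <+ x := by
  induction hz generalizing m with
  | slnil => exact ⟨[], by simp_all, .slnil, .slnil⟩
  | @cons z x c h ih =>
    by_cases hm : m = x.length + 1
    · exact ⟨c :: x, hm.symm, h.cons c, .refl _⟩
    · obtain ⟨y, hy, hzy, hyx⟩ := ih hzm (by simp at hmx; omega)
      exact ⟨y, hy, hzy, hyx.cons c⟩
  | @cons_cons z x c h ih =>
    obtain ⟨y, hy, hzy, hyx⟩ := ih (m := m - 1) (by simp at hzm; omega) (by simp at hmx; omega)
    exact ⟨c :: y, by simp at hzm; simp; omega, hzy.cons_cons c, hyx.cons_cons c⟩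

theorem exists_common_sublist {u v w : List α} (hu : u <+ w) (hv : v <+ w) :
    ∃ t : List α, t <+ u ∧ t <+ v ∧ u.length + v.length ≤ w.length + t.length := by
  match hu, hv with
  | .slnil, .slnil => exact ⟨[], .slnil, .slnil, le_rfl⟩
  | .cons c hu, .cons _ hv =>
    obtain ⟨t, htu, htv, ht⟩ := exists_common_sublist hu hv
    exact ⟨t, htu, htv, by simp; omega⟩
  | .cons c hu, .cons_cons _ hv =>
    obtain ⟨t, htu, htv, ht⟩ := exists_common_sublist hu hv
    exact ⟨t, htu, htv.cons c, by simp; omega⟩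
  | .cons_cons c hu, .cons _ hv =>
    obtain ⟨t, htu, htv, ht⟩ := exists_common_sublist hu hv
    exact ⟨t, htu.cons c, htv, by simp; omega⟩
  | .cons_cons c hu, .cons_cons _ hv =>
    obtain ⟨t, htu, htv, ht⟩ := exists_common_sublist hu hv
    exact ⟨c :: t, htu.cons_cons c, htv.cons_cons c, by simp; omega⟩

theorem exists_common_supersequence {z u v : List α} (hu : z <+ u) (hv : z <+ v) :
    ∃ w : List α, u <+ w ∧ v <+ w ∧ w.length + z.length = u.length + v.length := by
  match hu, hv with
  | .slnil, .slnil => exact ⟨[], .slnil, .slnil, rfl⟩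
  | .cons c hu, hv =>
    obtain ⟨w, huw, hvw, hw⟩ := exists_common_supersequence hu hv
    exact ⟨c :: w, huw.cons_cons c, hvw.cons c, by simp; omega⟩
  | hu, .cons c hv =>
    obtain ⟨w, huw, hvw, hw⟩ := exists_common_supersequence hu hv
    exact ⟨c :: w, huw.cons c, hvw.cons_cons c, by simp; omega⟩
  | .cons_cons c hu, .cons_cons _ hv =>
    obtain ⟨w, huw, hvw, hw⟩ := exists_common_supersequence hu hv
    exact ⟨c :: w, huw.cons_cons c, hvw.cons_cons c, by simp; omega⟩

end List.Sublist

section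

variable {q n a b : ℕ} {x y : List (Fin q)}

theorem sSet_inter_nonempty_of_delSet (hab : a + b ≤ n) (hx : x.length = n)
    (hy : y.length = n) (h : (delSet q n (a + b) x ∩ delSet q n (a + b) y).Nonempty) :
    (sSet q n a b x ∩ sSet q n a b y).Nonempty := by
  obtain ⟨z, ⟨hz, hzx⟩, -, hzy⟩ := h
  obtain ⟨u, hu, hzu, hux⟩ := hzx.exists_length_eq_between (m := n - a) (by omega) (by omega)
  obtain ⟨v, hv, hzv, hvy⟩ := hzy.exists_length_eq_between (m := n - a) (by omega) (by omega)
  obtain ⟨w, huw, hvw, hw⟩ := hzu.exists_common_supersequence hzv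
  have hw : w.length = n - a + b := by omega
  exact ⟨w, ⟨hw, u, hu, hux, huw⟩, hw, v, hv, hvy, hvw⟩

theorem delSet_inter_nonempty_of_sSet (h : (sSet q n a b x ∩ sSet q n a b y).Nonempty) :
    (delSet q n (a + b) x ∩ delSet q n (a + b) y).Nonempty := by
  obtain ⟨w, ⟨hw, u, hu, hux, huw⟩, -, v, hv, hvy, hvw⟩ := h
  obtain ⟨t, htu, htv, ht⟩ := huw.exists_common_sublist hvw
  have hz : (t.take (n - (a + b))).length = n - (a + b) := by simp; omega
  exact ⟨t.take (n - (a + b)), ⟨hz, (List.take_sublist _ t).trans (htu.trans hux)⟩,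
    hz, (List.take_sublist _ t).trans (htv.trans hvy)⟩

end

theorem stmt_1_general (q a b n : ℕ) (hab : a + b ≤ n)
    (x y : List (Fin q)) (hx : x.length = n) (hy : y.length = n) :
    delSet q n (a + b) x ∩ delSet q n (a + b) y = ∅ ↔
      sSet q n a b x ∩ sSet q n a b y = ∅ := by
  simp only [← Set.not_nonempty_iff_eq_empty, not_iff_not]
  exact ⟨sSet_inter_nonempty_of_delSet hab hx hy, delSet_inter_nonempty_of_sSet⟩

/-- For a + b ≤ n and q-ary strings x, y of length n,
D_{a+b}(x) ∩ D_{a+b}(y) = ∅ iff S_{a,b}(x) ∩ S_{a,b}(y) = ∅. -/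
theorem stmt_1 (q a b n : ℕ) (hq : 2 ≤ q) (hab : a + b ≤ n)
    (x y : List (Fin q)) (hx : x.length = n) (hy : y.length = n) :
    delSet q n (a + b) x ∩ delSet q n (a + b) y = ∅ ↔
      sSet q n a b x ∩ sSet q n a b y = ∅ :=
  stmt_1_general q a b n hab x y hx hy
end

section
/- Let a, b, n be natural numbers with a + b ≤ n and let C be a set of q-ary strings of length n. Then C is an (a+b)-deletion correcting code if and only if C is an a-deletion b-insertion correcting code. In particular, every (a+b)-deletion correcting code is an a-deletion b-insertion correcting code. -/
/-- A q-ary n-symbol a-deletion b-insertion correcting code: a set of q-ary strings of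
length n such that S_{a,b}(x) ∩ S_{a,b}(y) = ∅ for all distinct codewords x, y. -/
def IsDelInsCode (q n a b : ℕ) (C : Set (List (Fin q))) : Prop :=
  (∀ x ∈ C, x.length = n) ∧
    ∀ x ∈ C, ∀ y ∈ C, x ≠ y → sSet q n a b x ∩ sSet q n a b y = ∅

/-!
Two strings of length `n - a + b` that both contain subsequences of length `n - a` force those
subsequences to share a common subsequence of length `n - a - b`. Conversely, a common
subsequence `u` of `x` and `y` of length `n - a - b` extends to subsequences of length `n - a`
of `x` and of `y`, and any two strings containing `u` have a common supersequence of length at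
most `2 (n - a) - |u| = n - a + b`. So the two intersection conditions are violated together.
-/

namespace List

variable {α : Type*}

theorem Sublist.exists_common_sublist_s2 {s t w : List α} (hs : s <+ w) (ht : t <+ w) :
    ∃ u, u <+ s ∧ u <+ t ∧ s.length + t.length ≤ w.length + u.length := by
  induction w generalizing s t with
  | nil => simp_all
  | cons c w ih =>
    cases hs with
    | cons _ hs =>
      cases ht with
      | cons _ ht =>
        obtain ⟨u, hus, hut, hlen⟩ := ih hs ht
        exact ⟨u, hus, hut, by simp; omega⟩
      | cons_cons _ ht =>
        obtain ⟨u, hus, hut, hlen⟩ := ih hs ht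
        exact ⟨u, hus, hut.cons c, by simp at hlen ⊢; omega⟩
    | cons_cons _ hs =>
      cases ht with
      | cons _ ht =>
        obtain ⟨u, hus, hut, hlen⟩ := ih hs ht
        exact ⟨u, hus.cons c, hut, by simp at hlen ⊢; omega⟩
      | cons_cons _ ht =>
        obtain ⟨u, hus, hut, hlen⟩ := ih hs ht
        exact ⟨c :: u, hus.cons_cons c, hut.cons_cons c, by simp; omega⟩

theorem Sublist.exists_common_superlist {s t u : List α} (hs : u <+ s) (ht : u <+ t) :
    ∃ w, s <+ w ∧ t <+ w ∧ w.length + u.length ≤ s.length + t.length := by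
  induction s generalizing t u with
  | nil => exact ⟨t, nil_sublist t, .refl t, by simp [sublist_nil.mp hs]⟩
  | cons a s ihs =>
    induction t generalizing u with
    | nil => exact ⟨a :: s, .refl _, nil_sublist _, by simp [sublist_nil.mp ht]⟩
    | cons b t iht =>
      cases hs with
      | cons _ hs =>
        obtain ⟨w, hsw, htw, hlen⟩ := ihs hs ht
        exact ⟨a :: w, hsw.cons_cons a, htw.cons a, by simp at hlen ⊢; omega⟩
      | cons_cons _ hs =>
        cases ht with
        | cons _ ht =>
          obtain ⟨w, hsw, htw, hlen⟩ := iht (hs.cons_cons a) ht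
          exact ⟨b :: w, hsw.cons b, htw.cons_cons b, by simp at hlen ⊢; omega⟩
        | cons_cons _ ht =>
          obtain ⟨w, hsw, htw, hlen⟩ := ihs hs ht
          exact ⟨a :: w, hsw.cons_cons a, htw.cons_cons a, by simp at hlen ⊢; omega⟩

theorem Sublist.exists_sublist_sublist_length_eq {u x : List α} (h : u <+ x) {m : ℕ}
    (hum : u.length ≤ m) (hmx : m ≤ x.length) : ∃ s, u <+ s ∧ s <+ x ∧ s.length = m := by
  induction h generalizing m with
  | slnil => exact ⟨[], .slnil, .slnil, by simp_all⟩
  | @cons u x a h ih =>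
    rcases Nat.lt_or_ge x.length m with hxm | hmx'
    · exact ⟨a :: x, h.cons a, .refl _, by simp at hmx ⊢; omega⟩
    · obtain ⟨s, hus, hsx, rfl⟩ := ih hum hmx'
      exact ⟨s, hus, hsx.cons a, rfl⟩
  | @cons_cons u x a h ih =>
    obtain ⟨s, hus, hsx, hs⟩ := ih (m := m - 1) (by simp at hum; omega) (by simp at hmx; omega)
    exact ⟨a :: s, hus.cons_cons a, hsx.cons_cons a, by simp at hum ⊢; omega⟩

end List

theorem sSet_inter_nonempty_of_ins {q n a b : ℕ} {x y : List (Fin q)}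
    (h : (sSet q n a b x ∩ sSet q n a b y).Nonempty) :
    (sSet q n (a + b) 0 x ∩ sSet q n (a + b) 0 y).Nonempty := by
  obtain ⟨w, ⟨hw, z, hz, hzx, hzw⟩, -, z', hz', hz'y, hz'w⟩ := h
  obtain ⟨u, huz, huz', hu⟩ := hzw.exists_common_sublist_s2 hz'w
  have hv : (u.take (n - (a + b))).length = n - (a + b) := by
    rw [List.length_take]; omega
  have hvu : (u.take (n - (a + b))).Sublist u := List.take_sublist _ u
  exact ⟨_, ⟨hv, _, hv, hvu.trans (huz.trans hzx), .refl _⟩,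
    ⟨hv, _, hv, hvu.trans (huz'.trans hz'y), .refl _⟩⟩

theorem sSet_inter_nonempty_of_del {q n a b : ℕ} (hq : 0 < q) {x y : List (Fin q)}
    (hx : x.length = n) (hy : y.length = n)
    (h : (sSet q n (a + b) 0 x ∩ sSet q n (a + b) 0 y).Nonempty) :
    (sSet q n a b x ∩ sSet q n a b y).Nonempty := by
  obtain ⟨u, ⟨hu, z, hz, hzx, hzu⟩, -, z', hz', hz'y, hz'u⟩ := h
  have hux : u.Sublist x := hzu.eq_of_length (by omega) ▸ hzx
  have huy : u.Sublist y := hz'u.eq_of_length (by omega) ▸ hz'y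
  obtain ⟨s, hus, hsx, hs⟩ :=
    hux.exists_sublist_sublist_length_eq (m := n - a) (by omega) (by omega)
  obtain ⟨t, hut, hty, ht⟩ :=
    huy.exists_sublist_sublist_length_eq (m := n - a) (by omega) (by omega)
  obtain ⟨w, hsw, htw, hw⟩ := hus.exists_common_superlist hut
  let v := w ++ List.replicate (n - a + b - w.length) ⟨0, hq⟩
  have hv : v.length = n - a + b := by
    simp only [v, List.length_append, List.length_replicate]; omega
  have hwv : w.Sublist v := List.sublist_append_left _ _
  exact ⟨v, ⟨hv, s, hs, hsx, hsw.trans hwv⟩, ⟨hv, t, ht, hty, htw.trans hwv⟩⟩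

theorem IsDelInsCode.mono {q n a b a' b' : ℕ} {C : Set (List (Fin q))}
    (h : ∀ x ∈ C, ∀ y ∈ C, x.length = n → y.length = n →
      (sSet q n a' b' x ∩ sSet q n a' b' y).Nonempty →
        (sSet q n a b x ∩ sSet q n a b y).Nonempty)
    (hC : IsDelInsCode q n a b C) : IsDelInsCode q n a' b' C :=
  ⟨hC.1, fun x hx y hy hxy => Set.not_nonempty_iff_eq_empty.mp fun hne =>
    (h x hx y hy (hC.1 x hx) (hC.1 y hy) hne).ne_empty (hC.2 x hx y hy hxy)⟩

theorem stmt_2_general (q a b n : ℕ) (hq : 2 ≤ q)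
    (C : Set (List (Fin q))) :
    IsDelInsCode q n (a + b) 0 C ↔ IsDelInsCode q n a b C :=
  ⟨IsDelInsCode.mono fun _ _ _ _ _ _ => sSet_inter_nonempty_of_ins,
    IsDelInsCode.mono fun _ _ _ _ => sSet_inter_nonempty_of_del (by omega)⟩

/-- For a + b ≤ n, a set C of q-ary strings of length n is an
(a+b)-deletion correcting code iff it is an a-deletion b-insertion correcting code.
(An s-deletion correcting code is the case a = s, b = 0.)  In particular, every
(a+b)-deletion correcting code is an a-deletion b-insertion correcting code. -/
theorem stmt_2 (q a b n : ℕ) (hq : 2 ≤ q) (hab : a + b ≤ n)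
    (C : Set (List (Fin q))) (hC : ∀ x ∈ C, x.length = n) :
    IsDelInsCode q n (a + b) 0 C ↔ IsDelInsCode q n a b C :=
  stmt_2_general q a b n hq C
end

section
/- For every q-ary string x of length m and every natural number s, the number of q-ary strings of length m + s that have x as a subsequence equals ∑_{i=0}^{s} C(m+s, i) (q-1)^i. In particular this number does not depend on x. -/
/-!
Sort the supersequences of `a :: x` of length `n + 1` by their first symbol. If it is `a`, we may
embed `a` there, so the rest is any supersequence of `x` of length `n`; otherwise it is one of the
`q - 1` other symbols and the rest is a supersequence of `a :: x` of length `n`. Hence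
`N(a :: x, n + 1) = N(x, n) + (q - 1) N(a :: x, n)`, together with `N([], n) = q ^ n` and
`N(x, |x|) = 1`. By Pascal's rule the binomial sum obeys the same recurrence, and induction on
the excess length `s`, then on `x`, closes the argument.
-/

theorem sum_range_choose_mul_pow_succ (n s r : ℕ) :
    ∑ i ∈ Finset.range (s + 2), (n + 1).choose i * r ^ i =
      ∑ i ∈ Finset.range (s + 2), n.choose i * r ^ i
        + r * ∑ i ∈ Finset.range (s + 1), n.choose i * r ^ i := by
  have hshift : ∑ i ∈ Finset.range (s + 1), n.choose i * r ^ (i + 1) =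
      r * ∑ i ∈ Finset.range (s + 1), n.choose i * r ^ i := by
    rw [Finset.mul_sum]
    exact Finset.sum_congr rfl fun _ _ => by ring
  rw [Finset.sum_range_succ' _ (s + 1), Finset.sum_range_succ' (fun i => n.choose i * r ^ i),
    ← hshift]
  simp only [Nat.choose_succ_succ, add_mul, Finset.sum_add_distrib, Nat.choose_zero_right,
    Nat.succ_eq_add_one]
  omega

theorem sum_range_choose_mul_pow (n r : ℕ) :
    ∑ i ∈ Finset.range (n + 1), n.choose i * r ^ i = (r + 1) ^ n := by
  rw [add_pow]
  simp [mul_comm]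

namespace List

variable {α : Type*}

def supersequences (x : List α) (n : ℕ) : Set (List α) :=
  {w | w.length = n ∧ x.Sublist w}

theorem ncard_setOf_length_eq [Finite α] (n : ℕ) :
    {w : List α | w.length = n}.ncard = Nat.card α ^ n := by
  rw [← Nat.card_coe_set_eq]
  change Nat.card (Vector α n) = _
  exact (Nat.card_congr (Equiv.vectorEquivFin α n)).trans (by rw [Nat.card_fun, Nat.card_fin])

theorem finite_supersequences [Finite α] (x : List α) (n : ℕ) :
    (supersequences x n).Finite :=
  (finite_length_eq α n).subset fun _ h => h.1

theorem supersequences_length (x : List α) : supersequences x x.length = {x} := by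
  ext w
  exact ⟨fun ⟨hlen, hsub⟩ => (hsub.eq_of_length hlen.symm).symm, fun h => ⟨h ▸ rfl, h ▸ .refl x⟩⟩

theorem supersequences_nil (n : ℕ) : supersequences ([] : List α) n = {w | w.length = n} := by
  ext w
  simp [supersequences]

theorem supersequences_cons_succ (a : α) (x : List α) (n : ℕ) :
    supersequences (a :: x) (n + 1) =
      cons a '' supersequences x n ∪
        (fun p : α × List α => p.1 :: p.2) '' ({a}ᶜ ×ˢ supersequences (a :: x) n) := by
  ext w
  constructor
  · rintro ⟨hlen, hsub⟩
    obtain _ | ⟨b, w⟩ := w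
    · simp at hlen
    · simp only [length_cons, Nat.add_right_cancel_iff] at hlen
      by_cases hb : b = a
      · subst hb
        exact Or.inl ⟨w, ⟨hlen, hsub.of_cons_cons⟩, rfl⟩
      · refine Or.inr ⟨(b, w), ⟨hb, hlen, ?_⟩, rfl⟩
        exact (cons_sublist_cons'.1 hsub).resolve_right fun h => hb h.1.symm
  · rintro (⟨w, ⟨hlen, hsub⟩, rfl⟩ | ⟨⟨b, w⟩, ⟨-, hlen, hsub⟩, rfl⟩)
    · exact ⟨by simp [hlen], hsub.cons_cons a⟩
    · exact ⟨by simp [hlen], hsub.cons b⟩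

theorem ncard_supersequences_cons_succ [Finite α] (a : α) (x : List α) (n : ℕ) :
    (supersequences (a :: x) (n + 1)).ncard =
      (supersequences x n).ncard + (Nat.card α - 1) * (supersequences (a :: x) n).ncard := by
  have hdisj : _root_.Disjoint (cons a '' supersequences x n)
      ((fun p : α × List α => p.1 :: p.2) '' ({a}ᶜ ×ˢ supersequences (a :: x) n)) := by
    rw [Set.disjoint_left]
    rintro _ ⟨w, -, rfl⟩ ⟨⟨b, v⟩, ⟨hb, -⟩, heq⟩
    exact hb (head_eq_of_cons_eq heq)
  have hinj : Function.Injective (fun p : α × List α => p.1 :: p.2) := by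
    rintro ⟨b, w⟩ ⟨b', w'⟩ h
    simpa using h
  rw [supersequences_cons_succ, Set.ncard_union_eq hdisj
      ((finite_supersequences x n).image _)
      ((Set.toFinite _ |>.prod (finite_supersequences _ n)).image _),
    Set.ncard_image_of_injective _ cons_injective, Set.ncard_image_of_injective _ hinj,
    Set.ncard_prod, Set.ncard_compl, Set.ncard_singleton]

theorem ncard_supersequences [Finite α] [Nonempty α] (x : List α) (s : ℕ) :
    (supersequences x (x.length + s)).ncard =
      ∑ i ∈ Finset.range (s + 1), (x.length + s).choose i * (Nat.card α - 1) ^ i := by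
  induction s generalizing x with
  | zero => simp [supersequences_length]
  | succ s ih =>
    induction x with
    | nil =>
      rw [supersequences_nil, ncard_setOf_length_eq, length_nil, Nat.zero_add,
        sum_range_choose_mul_pow, Nat.sub_add_cancel Nat.card_pos]
    | cons a x ihx =>
      have hlen : x.length + (s + 1) = (a :: x).length + s := by rw [length_cons]; omega
      rw [length_cons, Nat.add_right_comm, ncard_supersequences_cons_succ, ihx, hlen, ih, ← hlen]
      exact (sum_range_choose_mul_pow_succ _ s _).symm

end List

/-- For every q-ary string x of length m (q ≥ 1) and every s, the number of
q-ary strings of length m + s having x as a subsequence equals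
∑_{i=0}^{s} C(m+s, i) (q-1)^i; in particular it does not depend on x. -/
theorem stmt_3 (q m s : ℕ) (hq : 1 ≤ q) (x : List (Fin q)) (hx : x.length = m) :
    {w : List (Fin q) | w.length = m + s ∧ x.Sublist w}.ncard =
      ∑ i ∈ Finset.range (s + 1), (m + s).choose i * (q - 1) ^ i := by
  have : Nonempty (Fin q) := Fin.pos_iff_nonempty.mp hq
  subst hx
  exact (List.ncard_supersequences x s).trans (by rw [Nat.card_fin])
end

section
/- For all natural numbers q ≥ 2 and l, a, b, with s = a + b, the number of edges of B_{q,l,a,b} satisfies |E(B_{q,l,a,b})| ≥ C(s, a) · (q-1)^s · ∑_{(c_0,…,c_s) ∈ M(s+1, l, 2)} ∏_{i=0}^{s} (q^{c_i} - q(q-1)). -/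
/-- The edge set of the bipartite graph B_{q,l,a,b}: pairs (x, y) where x has length
l + a, y has length l + b, and x and y have a common subsequence of length l. -/
def edgeSet (q l a b : ℕ) : Set (List (Fin q) × List (Fin q)) :=
  {p | p.1.length = l + a ∧ p.2.length = l + b ∧
    ∃ z : List (Fin q), z.length = l ∧ z.Sublist p.1 ∧ z.Sublist p.2}

/-- M(t, l, k): the finite set of t-tuples (c_0, …, c_{t-1}) of natural numbers with
c_i ≥ k for all i and ∑_i c_i = l. -/
def compSet (t l k : ℕ) : Finset (Fin t → ℕ) :=
  (Finset.Nat.antidiagonalTuple t l).filter fun c => ∀ i, k ≤ c i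

/-!
An edge `(x, y)` of `B_{q,l,a,b}` arises from `l` symbols cut into `s + 1` blocks of lengths
`c_i ≥ 2` by inserting one symbol at each of the `s` block boundaries, into `x` at `a` of them and
into `y` at the others, each inserted symbol differing from the first symbol of the next block.
If no block is alternating (of the form `uvuv…` with `u ≠ v`), these data can be read off from
`(x, y)`: each block is the longest common prefix of what remains of `x` and `y`, and resolving a
boundary on the wrong side would make one of the two adjacent blocks alternating. As at most
`q (q - 1)` strings of a given length `≥ 2` are alternating, counting the data gives the bound.
-/

open Finset

namespace CommonSubseq

variable {α : Type*}

def IsAlternating (l : List α) : Prop :=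
  ∃ x y, x ≠ y ∧ ∀ i (h : i < l.length), l[i] = if Even i then x else y

lemma IsAlternating.ofFn_eq_ite {m : ℕ} (hm : 2 ≤ m) {v : Fin m → α}
    (h : IsAlternating (List.ofFn v)) : v ⟨0, by omega⟩ ≠ v ⟨1, hm⟩ ∧
      ∀ i, v i = if Even (i : ℕ) then v ⟨0, by omega⟩ else v ⟨1, hm⟩ := by
  obtain ⟨x, y, hxy, hv⟩ := h
  have hv' : ∀ i : Fin m, v i = if Even (i : ℕ) then x else y := fun i => by
    simpa using hv i (by simp)
  simpa [hv'] using hxy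

lemma card_alternating_le [Fintype α] {m : ℕ}
    [DecidablePred fun v : Fin m → α => IsAlternating (List.ofFn v)] (hm : 2 ≤ m) :
    #{v : Fin m → α | IsAlternating (List.ofFn v)} ≤ Fintype.card α * (Fintype.card α - 1) := by
  classical
  calc _ ≤ #(univ : Finset α).offDiag := by
        refine card_le_card_of_injOn (fun v => (v ⟨0, by omega⟩, v ⟨1, hm⟩)) ?_ ?_
        · intro v hv
          simpa using (IsAlternating.ofFn_eq_ite hm (mem_filter.mp hv).2).1
        · intro v hv w hw hvw
          simp only [Prod.mk.injEq] at hvw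
          funext i
          rw [(IsAlternating.ofFn_eq_ite hm (mem_filter.mp hv).2).2 i,
            (IsAlternating.ofFn_eq_ite hm (mem_filter.mp hw).2).2 i, hvw.1, hvw.2]
    _ = _ := by rw [offDiag_card, card_univ, Nat.mul_sub_one]

open scoped Classical in
noncomputable def nonAlternating (α : Type*) [Fintype α] (m : ℕ) : Finset (Fin m → α) :=
  {v | ¬ IsAlternating (List.ofFn v)}

lemma card_nonAlternating [Fintype α] {m : ℕ} (hm : 2 ≤ m) :
    Fintype.card α ^ m - Fintype.card α * (Fintype.card α - 1) ≤ #(nonAlternating α m) := by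
  classical
  have := card_filter_add_card_filter_not (s := (univ : Finset (Fin m → α)))
    fun v => IsAlternating (List.ofFn v)
  have := card_alternating_le (α := α) hm
  simp only [card_univ, Fintype.card_fun, Fintype.card_fin] at *
  rw [nonAlternating]
  omega

lemma getElem_eq_of_append_eq {P R u v : List α} (h : P ++ u = R ++ v) (k : ℕ)
    (hP : k < P.length) (hR : k < R.length) : P[k] = R[k] := by
  have := List.getElem_of_eq h (i := k) (by simp; omega)
  rwa [List.getElem_append_left hP, List.getElem_append_left hR] at this

/-- As far as both sides are defined, `P = e :: Q` and `Q = e' :: P`, so `P` and `Q` have period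
two; `e ≠ e'` because `Q` starts with `e'`. -/
lemma isAlternating_or_of_shift {P Q u₁ u₂ u₃ u₄ : List α} {e e' : α} (hQ : Q ≠ [])
    (h₁ : P ++ u₁ = e :: (Q ++ u₂)) (h₂ : Q ++ u₃ = e' :: (P ++ u₄)) (he : Q.head? ≠ some e) :
    IsAlternating P ∨ IsAlternating Q := by
  have hP : ∀ k (hk : k < P.length) (hkQ : k ≤ Q.length), P[k] = (e :: Q)[k]'(by simp; omega) :=
    fun k hk hkQ => getElem_eq_of_append_eq (R := e :: Q) h₁ k hk (by simp; omega)
  have hQ' : ∀ k (hk : k < Q.length) (hkP : k ≤ P.length), Q[k] = (e' :: P)[k]'(by simp; omega) :=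
    fun k hk hkP => getElem_eq_of_append_eq (R := e' :: P) h₂ k hk (by simp; omega)
  have hee' : e ≠ e' := by
    obtain ⟨x, Q, rfl⟩ := List.exists_cons_of_ne_nil hQ
    have := hQ' 0 (by simp) (by omega)
    rintro rfl
    simp_all
  have key : ∀ k, (∀ (hk : k < P.length), k ≤ Q.length → P[k] = if Even k then e else e') ∧
      (∀ (hk : k < Q.length), k ≤ P.length → Q[k] = if Even k then e' else e) := by
    intro k
    induction k with
    | zero => exact ⟨fun hk h => by simp [hP 0 hk h], fun hk h => by simp [hQ' 0 hk h]⟩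
    | succ k ih =>
      refine ⟨fun hk h => ?_, fun hk h => ?_⟩
      · rw [hP _ hk h, List.getElem_cons_succ, ih.2 (by omega) (by omega)]
        by_cases hk : Even k <;> simp [hk, Nat.even_add_one]
      · rw [hQ' _ hk h, List.getElem_cons_succ, ih.1 (by omega) (by omega)]
        by_cases hk : Even k <;> simp [hk, Nat.even_add_one]
  by_cases hPQ : P.length ≤ Q.length + 1
  · exact .inl ⟨e, e', hee', fun k hk => (key k).1 hk (by omega)⟩
  · exact .inr ⟨e', e, hee'.symm, fun k hk => (key k).2 hk (by omega)⟩

lemma length_le_of_append_eq_append {u u' A B A' B' : List α} (hA : u ++ A = u' ++ A')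
    (hB : u ++ B = u' ++ B') (h : A.head? ≠ B.head?) : u'.length ≤ u.length := by
  by_contra! hlt
  obtain ⟨d, rfl, rfl⟩ : ∃ d, u' = u ++ d ∧ A = d ++ A' := by
    rcases List.append_eq_append_iff.mp hA with h | ⟨d, rfl, -⟩
    · exact h
    · simp at hlt
  obtain rfl : B = d ++ B' := by simpa using hB
  obtain ⟨x, d, rfl⟩ := List.exists_cons_of_ne_nil (show d ≠ [] by rintro rfl; simp at hlt)
  simp at h

lemma append_inj_of_head?_ne {u u' A B A' B' : List α} (hA : u ++ A = u' ++ A')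
    (hB : u ++ B = u' ++ B') (h : A.head? ≠ B.head?) (h' : A'.head? ≠ B'.head?) :
    u = u' ∧ A = A' ∧ B = B' := by
  have hlen := le_antisymm (length_le_of_append_eq_append hA.symm hB.symm h')
    (length_le_of_append_eq_append hA hB h)
  obtain ⟨rfl, rfl⟩ := List.append_inj hA hlen
  exact ⟨rfl, rfl, List.append_cancel_left hB⟩

lemma eq_of_apply_zero_of_tail {β : Type*} {s : ℕ} {f g : Fin (s + 1) → β} (h₀ : f 0 = g 0)
    (h : Fin.tail f = Fin.tail g) : f = g := by
  rw [← Fin.cons_self_tail f, ← Fin.cons_self_tail g, Fin.cons_inj]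
  exact ⟨h₀, h⟩

/-- The pair of strings with common blocks `W 0, …, W s`, where between `W i` and `W (i + 1)` the
symbol `e i` is inserted into the first string if `b i` and into the second one otherwise. -/
def weave : {s : ℕ} → (Fin (s + 1) → List α) → (Fin s → Bool) → (Fin s → α) → List α × List α
  | 0, W, _, _ => (W 0, W 0)
  | _ + 1, W, b, e =>
    let p := weave (Fin.tail W) (Fin.tail b) (Fin.tail e)
    (W 0 ++ cond (b 0) (e 0 :: p.1) p.1, W 0 ++ cond (b 0) p.2 (e 0 :: p.2))

lemma weave_fst_eq_append {s : ℕ} (W : Fin (s + 1) → List α) (b : Fin s → Bool) (e : Fin s → α) :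
    ∃ t, (weave W b e).1 = W 0 ++ t := by
  cases s
  · exact ⟨[], by simp [weave]⟩
  · exact ⟨_, rfl⟩

lemma weave_snd_eq_append {s : ℕ} (W : Fin (s + 1) → List α) (b : Fin s → Bool) (e : Fin s → α) :
    ∃ t, (weave W b e).2 = W 0 ++ t := by
  cases s
  · exact ⟨[], by simp [weave]⟩
  · exact ⟨_, rfl⟩

lemma head?_weave_tail_ne {s : ℕ} {W : Fin (s + 2) → List α} {b : Fin (s + 1) → Bool}
    {e : Fin (s + 1) → α} (hW : W 1 ≠ []) (he : (W 1).head? ≠ some (e 0)) :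
    (cond (b 0) (e 0 :: (weave (Fin.tail W) (Fin.tail b) (Fin.tail e)).1)
        (weave (Fin.tail W) (Fin.tail b) (Fin.tail e)).1).head? ≠
      (cond (b 0) (weave (Fin.tail W) (Fin.tail b) (Fin.tail e)).2
        (e 0 :: (weave (Fin.tail W) (Fin.tail b) (Fin.tail e)).2)).head? := by
  obtain ⟨t₁, ht₁⟩ := weave_fst_eq_append (Fin.tail W) (Fin.tail b) (Fin.tail e)
  obtain ⟨t₂, ht₂⟩ := weave_snd_eq_append (Fin.tail W) (Fin.tail b) (Fin.tail e)
  rw [Fin.tail] at ht₁ ht₂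
  cases b 0
  · simpa [ht₁, List.head?_append_of_ne_nil _ hW] using he
  · simpa [ht₂, List.head?_append_of_ne_nil _ hW] using he.symm

/-- Blocks are recovered as longest common prefixes; the two ways of resolving a block boundary
differently would force a block to be alternating. -/
theorem weave_inj {s : ℕ} {W W' : Fin (s + 1) → List α} {b b' : Fin s → Bool} {e e' : Fin s → α}
    (hW : ∀ j, W j ≠ [] ∧ ¬ IsAlternating (W j)) (hW' : ∀ j, W' j ≠ [] ∧ ¬ IsAlternating (W' j))
    (he : ∀ i, (W i.succ).head? ≠ some (e i)) (he' : ∀ i, (W' i.succ).head? ≠ some (e' i))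
    (h : weave W b e = weave W' b' e') : W = W' ∧ b = b' ∧ e = e' := by
  induction s with
  | zero =>
    simp only [weave, Prod.mk.injEq, and_self] at h
    exact ⟨eq_of_apply_zero_of_tail h (Subsingleton.elim _ _), Subsingleton.elim _ _,
      Subsingleton.elim _ _⟩
  | succ s ih =>
    simp only [weave, Prod.mk.injEq] at h
    obtain ⟨h₀, hx, hy⟩ := append_inj_of_head?_ne h.1 h.2
      (head?_weave_tail_ne (hW 1).1 (he 0)) (head?_weave_tail_ne (hW' 1).1 (he' 0))
    obtain ⟨t₁, ht₁⟩ := weave_fst_eq_append (Fin.tail W) (Fin.tail b) (Fin.tail e)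
    obtain ⟨t₂, ht₂⟩ := weave_snd_eq_append (Fin.tail W) (Fin.tail b) (Fin.tail e)
    obtain ⟨t₁', ht₁'⟩ := weave_fst_eq_append (Fin.tail W') (Fin.tail b') (Fin.tail e')
    obtain ⟨t₂', ht₂'⟩ := weave_snd_eq_append (Fin.tail W') (Fin.tail b') (Fin.tail e')
    have shift_absurd : ∀ {u₁ u₂ u₃ u₄ : List α} {x : α},
        W' 1 ++ u₁ = e 0 :: (W 1 ++ u₂) → W 1 ++ u₃ = x :: (W' 1 ++ u₄) → False := by
      intro u₁ u₂ u₃ u₄ x h₁ h₂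
      rcases isAlternating_or_of_shift (hW 1).1 h₁ h₂ (he 0) with hP | hQ
      · exact (hW' 1).2 hP
      · exact (hW 1).2 hQ
    rw [Fin.tail] at ht₁ ht₂ ht₁' ht₂'
    obtain ⟨hb₀, he₀, hp⟩ : b 0 = b' 0 ∧ e 0 = e' 0 ∧
        weave (Fin.tail W) (Fin.tail b) (Fin.tail e) =
          weave (Fin.tail W') (Fin.tail b') (Fin.tail e') := by
      cases hb : b 0 <;> cases hb' : b' 0 <;>
        simp only [hb, hb', cond_true, cond_false, List.cons.injEq] at hx hy
      · exact ⟨rfl, hy.1, Prod.ext hx hy.2⟩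
      · rw [ht₁, ht₁'] at hx
        rw [ht₂, ht₂'] at hy
        exact (shift_absurd hy.symm hx).elim
      · rw [ht₁, ht₁'] at hx
        rw [ht₂, ht₂'] at hy
        exact (shift_absurd hx.symm hy).elim
      · exact ⟨rfl, hx.1, Prod.ext hx.2 hy⟩
    obtain ⟨hWt, hbt, het⟩ := ih (fun j => hW j.succ) (fun j => hW' j.succ)
      (fun i => he i.succ) (fun i => he' i.succ) hp
    exact ⟨eq_of_apply_zero_of_tail h₀ hWt, eq_of_apply_zero_of_tail hb₀ hbt,
      eq_of_apply_zero_of_tail he₀ het⟩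

lemma flatten_sublist_weave_fst {s : ℕ} (W : Fin (s + 1) → List α) (b : Fin s → Bool)
    (e : Fin s → α) : (List.ofFn W).flatten.Sublist (weave W b e).1 := by
  induction s with
  | zero => simp [weave]
  | succ s ih =>
    rw [List.ofFn_succ, List.flatten_cons]
    refine (List.Sublist.append_left ?_ _)
    cases b 0
    · exact ih (Fin.tail W) (Fin.tail b) (Fin.tail e)
    · exact (ih (Fin.tail W) (Fin.tail b) (Fin.tail e)).cons _

lemma flatten_sublist_weave_snd {s : ℕ} (W : Fin (s + 1) → List α) (b : Fin s → Bool)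
    (e : Fin s → α) : (List.ofFn W).flatten.Sublist (weave W b e).2 := by
  induction s with
  | zero => simp [weave]
  | succ s ih =>
    rw [List.ofFn_succ, List.flatten_cons]
    refine (List.Sublist.append_left ?_ _)
    cases b 0
    · exact (ih (Fin.tail W) (Fin.tail b) (Fin.tail e)).cons _
    · exact ih (Fin.tail W) (Fin.tail b) (Fin.tail e)

lemma length_weave_fst {s : ℕ} (W : Fin (s + 1) → List α) (b : Fin s → Bool) (e : Fin s → α) :
    (weave W b e).1.length = ∑ j, (W j).length + #{i | b i} := by
  induction s with
  | zero => simp [weave]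
  | succ s ih =>
    rw [Fin.sum_univ_succ, Fin.card_filter_univ_succ]
    have : (weave (Fin.tail W) (Fin.tail b) (Fin.tail e)).1.length =
        ∑ j : Fin (s + 1), (W j.succ).length + #{i : Fin s | b i.succ} := ih _ _ _
    simp only [weave]
    cases b 0 <;> simp [this] <;> ring

lemma length_weave_snd {s : ℕ} (W : Fin (s + 1) → List α) (b : Fin s → Bool) (e : Fin s → α) :
    (weave W b e).2.length = ∑ j, (W j).length + #{i | b i = false} := by
  induction s with
  | zero => simp [weave]
  | succ s ih =>
    rw [Fin.sum_univ_succ, Fin.card_filter_univ_succ]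
    have : (weave (Fin.tail W) (Fin.tail b) (Fin.tail e)).2.length =
        ∑ j : Fin (s + 1), (W j.succ).length + #{i : Fin s | b i.succ = false} := ih _ _ _
    simp only [weave]
    cases b 0 <;> simp [this] <;> ring

abbrev Blocks (α : Type*) (s : ℕ) : Type _ := Σ c : Fin (s + 1) → ℕ, ∀ j, Fin (c j) → α

def Blocks.toLists {s : ℕ} (B : Blocks α s) (j : Fin (s + 1)) : List α := List.ofFn (B.2 j)

lemma Blocks.toLists_injective {s : ℕ} : Function.Injective (Blocks.toLists : Blocks α s → _) := by
  rintro ⟨c, w⟩ ⟨c', w'⟩ h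
  obtain rfl : c = c' := funext fun j => by
    simpa [toLists] using congrArg List.length (congrFun h j)
  obtain rfl : w = w' := funext fun j => List.ofFn_injective (congrFun h j)
  rfl

section Encoding

variable {n s : ℕ}

/-- `Fin.succAbove` enumerates the `n` symbols that differ from the first symbol of the next
block, so that the inserted symbol never starts the block it precedes. -/
def gapSymbol (W : Fin (s + 1) → List (Fin (n + 1))) (t : Fin s → Fin n) (i : Fin s) :
    Fin (n + 1) :=
  (W i.succ).headI.succAbove (t i)

def encode (x : Blocks (Fin (n + 1)) s × Finset (Fin s) × (Fin s → Fin n)) :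
    List (Fin (n + 1)) × List (Fin (n + 1)) :=
  weave x.1.toLists (fun i => decide (i ∈ x.2.1)) (gapSymbol x.1.toLists x.2.2)

noncomputable def codes (n s l a : ℕ) :
    Finset (Blocks (Fin (n + 1)) s × Finset (Fin s) × (Fin s → Fin n)) :=
  ((compSet (s + 1) l 2).sigma fun c => Fintype.piFinset fun j => nonAlternating _ (c j)) ×ˢ
    (powersetCard a univ ×ˢ univ)

lemma card_codes (l a : ℕ) : #(codes n s l a) =
    (∑ c ∈ compSet (s + 1) l 2, ∏ j, #(nonAlternating (Fin (n + 1)) (c j))) *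
      (s.choose a * n ^ s) := by
  simp [codes, card_sigma, Fintype.card_piFinset]

lemma of_mem_codes {l a : ℕ} {x : Blocks (Fin (n + 1)) s × Finset (Fin s) × (Fin s → Fin n)}
    (hx : x ∈ codes n s l a) :
    (∀ j, x.1.toLists j ≠ [] ∧ ¬ IsAlternating (x.1.toLists j)) ∧
      ∑ j, (x.1.toLists j).length = l ∧ #x.2.1 = a := by
  obtain ⟨x, A, t⟩ := x
  simp only [codes, mem_product, mem_sigma, compSet, mem_filter, Finset.Nat.mem_antidiagonalTuple,
    Fintype.mem_piFinset, nonAlternating, mem_univ, true_and, mem_powersetCard, subset_univ,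
    and_true] at hx
  obtain ⟨⟨⟨hsum, hc⟩, hW⟩, hA⟩ := hx
  refine ⟨fun j => ⟨?_, hW j⟩, by simpa [Blocks.toLists] using hsum, hA⟩
  have := hc j
  simp [Blocks.toLists]
  omega

lemma head?_ne_gapSymbol {W : Fin (s + 1) → List (Fin (n + 1))} (t : Fin s → Fin n) (i : Fin s)
    (hW : W i.succ ≠ []) : (W i.succ).head? ≠ some (gapSymbol W t i) := by
  obtain ⟨x, w, hxw⟩ := List.exists_cons_of_ne_nil hW
  simp [gapSymbol, hxw, (Fin.succAbove_ne x (t i)).symm]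

lemma encode_mem_edgeSet {l a b : ℕ} {x : Blocks (Fin (n + 1)) (a + b) × Finset (Fin (a + b)) ×
    (Fin (a + b) → Fin n)} (hx : x ∈ codes n (a + b) l a) : encode x ∈ edgeSet (n + 1) l a b := by
  obtain ⟨-, hl, hA⟩ := of_mem_codes hx
  refine ⟨?_, ?_, (List.ofFn x.1.toLists).flatten, ?_, flatten_sublist_weave_fst _ _ _,
    flatten_sublist_weave_snd _ _ _⟩
  · simp [encode, length_weave_fst, hl, hA]
  · simp [encode, length_weave_snd, hl, filter_not, card_sdiff, hA]
  · rw [List.length_flatten, List.map_ofFn, List.sum_ofFn]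
    exact hl

lemma encode_injOn (l a : ℕ) : Set.InjOn (encode (n := n) (s := s)) (codes n s l a) := by
  rintro ⟨B, A, t⟩ hx ⟨B', A', t'⟩ hx' h
  have hW := (of_mem_codes hx).1
  have hW' := (of_mem_codes hx').1
  obtain ⟨hBB', hAA', htt'⟩ := weave_inj hW hW' (fun i => head?_ne_gapSymbol t i (hW i.succ).1)
    (fun i => head?_ne_gapSymbol t' i (hW' i.succ).1) h
  obtain rfl := Blocks.toLists_injective hBB'
  obtain rfl : A = A' := by ext i; simpa using congrFun hAA' i
  obtain rfl : t = t' := funext fun i => Fin.succAbove_right_injective (congrFun htt' i)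
  rfl

end Encoding

end CommonSubseq

open CommonSubseq in
/-- with s = a + b,
|E(B_{q,l,a,b})| ≥ C(s, a) · (q-1)^s · ∑_{c ∈ M(s+1, l, 2)} ∏_{i=0}^{s} (q^{c_i} - q(q-1)). -/
theorem stmt_5 (q l a b : ℕ) (hq : 2 ≤ q) :
    (a + b).choose a * (q - 1) ^ (a + b) *
        ∑ c ∈ compSet (a + b + 1) l 2, ∏ i, (q ^ c i - q * (q - 1)) ≤
      (edgeSet q l a b).ncard := by
  obtain ⟨n, rfl⟩ : ∃ n, q = n + 1 := ⟨q - 1, by omega⟩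
  have hfin : (edgeSet (n + 1) l a b).Finite :=
    ((List.finite_length_eq _ (l + a)).prod (List.finite_length_eq _ (l + b))).subset
      fun _ hp => ⟨hp.1, hp.2.1⟩
  calc _ ≤ #(codes n (a + b) l a) := by
        rw [card_codes, Nat.add_sub_cancel, mul_comm]
        gcongr with c hc j
        simpa using card_nonAlternating (α := Fin (n + 1)) ((mem_filter.mp hc).2 j)
    _ = (codes n (a + b) l a : Set _).ncard := (Set.ncard_coe_finset _).symm
    _ ≤ _ := Set.ncard_le_ncard_of_injOn encode (fun _ hx => encode_mem_edgeSet hx)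
        (encode_injOn l a) hfin
end

section
/- Let q ≥ 2 and let x be a q-ary string of length n with exactly r runs, and suppose every alternating contiguous substring (infix) of x has length at most c. Then |S_{a,b}(x)| ≥ C(r - a - 2 - (a+1)c, a) · C(n - 2a - 1 - (2a+b+1)c, b) · (q-1)^b, where subtraction is truncated natural subtraction (so a binomial coefficient whose top argument would be negative is 0). -/
/-- The number of runs of a string: 1 plus the number of indices i < length - 1
with x_i ≠ x_{i+1}. -/
def numRuns {q : ℕ} (x : List (Fin q)) : ℕ :=
  1 + ((Finset.range (x.length - 1)).filter fun i => x[i]? ≠ x[i + 1]?).card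

/-- A string is alternating if there are u ≠ v with u at every even index and v at
every odd index. (For q ≥ 2, every string of length at most 1 is alternating.) -/
def IsAlternating {q : ℕ} (w : List (Fin q)) : Prop :=
  ∃ u v : Fin q, u ≠ v ∧ ∀ i < w.length, w[i]? = some (if i % 2 = 0 then u else v)

/-!
Encode a choice of `a` deletions and `b` insertions (position and inserted symbol) as an edit
pattern of `x`; the edited word lies in `S_{a,b}(x)`, the common subsequence being `x` with only
the deletions performed. If every deletion sits at a run boundary, every inserted symbol differs
from the symbol it precedes, and any two edits are more than `c` positions apart, then the edited
word determines the pattern: at the first position where two patterns differ, either exactly one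
of them changes the next output symbol, or one deletes while the other inserts, and then equality
of the outputs forces an alternating infix of length `c + 2` in `x`.

Deletions are taken at the run boundaries of indices `A_j + j (c + 1)` for an `a`-subset
`A_0 < A_1 < ⋯` of `[0, r - a - 2 - (a + 1) c)`. Insertions are taken at the `(B_j + j c)`-th
position far from all deletions, for a `b`-subset `B` of `[0, n - 2a - 1 - (2a + b + 1) c)`;
at most `a (2c + 2)` positions are near a deletion, which keeps the insertions inside `x`.
-/

inductive Edit (α : Type*) where
  | keep
  | del
  | ins (s : α)

namespace Edit

variable {α : Type*}

def apply : Edit α → α → List α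
  | keep, y => [y]
  | del, _ => []
  | ins s, y => [s, y]

def len : Edit α → ℕ
  | keep => 1
  | del => 0
  | ins _ => 2

lemma length_apply (e : Edit α) (y : α) : (e.apply y).length = e.len := by
  cases e <;> rfl

def dropIns : Edit α → Edit α
  | ins _ => keep
  | e => e

lemma dropIns_apply_sublist (e : Edit α) (y : α) :
    (e.dropIns.apply y).Sublist (e.apply y) := by
  cases e <;> simp [dropIns, apply]

lemma dropIns_apply_sublist_keep (e : Edit α) (y : α) :
    (e.dropIns.apply y).Sublist (keep.apply y) := by
  cases e <;> simp [dropIns, apply]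

end Edit

open Edit

variable {α : Type*}

def applyEdits : List α → (ℕ → Edit α) → List α
  | [], _ => []
  | y :: x, E => (E 0).apply y ++ applyEdits x (fun i => E (i + 1))

lemma applyEdits_cons (y : α) (x : List α) (E : ℕ → Edit α) :
    applyEdits (y :: x) E = (E 0).apply y ++ applyEdits x (fun i => E (i + 1)) := rfl

lemma length_applyEdits (x : List α) (E : ℕ → Edit α) :
    (applyEdits x E).length = ∑ i ∈ Finset.range x.length, (E i).len := by
  induction x generalizing E with
  | nil => rfl
  | cons y x ih =>
    rw [applyEdits_cons, List.length_append, length_apply, ih, List.length_cons,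
      Finset.sum_range_succ', add_comm]

lemma length_applyEdits_add_card {x : List α} {E : ℕ → Edit α} {D I : Finset ℕ}
    (hD : D ⊆ Finset.range x.length) (hI : I ⊆ Finset.range x.length)
    (hE : ∀ i, (E i).len + (if i ∈ D then 1 else 0) = 1 + (if i ∈ I then 1 else 0)) :
    (applyEdits x E).length + D.card = x.length + I.card := by
  have hcard : ∀ S : Finset ℕ, S ⊆ Finset.range x.length →
      ∑ i ∈ Finset.range x.length, (if i ∈ S then 1 else 0) = S.card := fun S hS => by
    rw [Finset.sum_boole, Finset.filter_mem_eq_inter, Finset.inter_eq_right.mpr hS, Nat.cast_id]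
  rw [length_applyEdits, ← hcard D hD, ← hcard I hI, ← Finset.sum_add_distrib,
    Finset.sum_congr rfl fun i _ => hE i, Finset.sum_add_distrib, Finset.sum_const,
    Finset.card_range, smul_eq_mul, mul_one]

lemma applyEdits_keep (x : List α) : applyEdits x (fun _ => keep) = x := by
  induction x with
  | nil => rfl
  | cons y x ih => simp [applyEdits_cons, apply, ih]

lemma applyEdits_sublist_applyEdits {E E' : ℕ → Edit α}
    (h : ∀ i y, ((E i).apply y).Sublist ((E' i).apply y)) (x : List α) :
    (applyEdits x E).Sublist (applyEdits x E') := by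
  induction x generalizing E E' with
  | nil => exact .slnil
  | cons y x ih => exact (h 0 y).append (ih fun i => h (i + 1))

lemma getElem?_applyEdits_of_keep {E : ℕ → Edit α} {j : ℕ} (hE : ∀ i ≤ j, E i = keep)
    (x : List α) : (applyEdits x E)[j]? = x[j]? := by
  induction x generalizing E j with
  | nil => rfl
  | cons y x ih =>
    rw [applyEdits_cons, hE 0 (Nat.zero_le j)]
    cases j with
    | zero => rfl
    | succ j => exact ih (fun i hi => hE (i + 1) (by omega))

structure IsSparseEdit (c : ℕ) (x : List α) (E : ℕ → Edit α) : Prop where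
  del_boundary : ∀ i, E i = del → x[i]? ≠ x[i + 1]?
  ins_ne : ∀ i s, E i = ins s → x[i]? ≠ some s
  room : ∀ i, E i ≠ keep → i + c + 2 ≤ x.length
  keep_after_del : ∀ i j, E i = del → i < j → j ≤ i + c + 1 → E j = keep
  keep_after_ins : ∀ i j s, E i = ins s → i < j → j ≤ i + c → E j = keep

namespace IsSparseEdit

variable {c : ℕ} {y : α} {x : List α} {E : ℕ → Edit α}

lemma tail (hE : IsSparseEdit c (y :: x) E) : IsSparseEdit c x (fun i => E (i + 1)) where
  del_boundary i h := by simpa using hE.del_boundary (i + 1) h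
  ins_ne i s h := by simpa using hE.ins_ne (i + 1) s h
  room i h := by have := hE.room (i + 1) h; simp only [List.length_cons] at this; omega
  keep_after_del i j h hij hj := hE.keep_after_del (i + 1) (j + 1) h (by omega) (by omega)
  keep_after_ins i j s h hij hj := hE.keep_after_ins (i + 1) (j + 1) s h (by omega) (by omega)

lemma eq_keep_of_nil (hE : IsSparseEdit c [] E) (i : ℕ) : E i = keep := by
  by_contra h
  simpa using hE.room i h

lemma getElem?_zero_ne (hE : IsSparseEdit c (y :: x) E) (h : E 0 ≠ keep) :
    (applyEdits (y :: x) E)[0]? ≠ some y := by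
  rw [applyEdits_cons]
  cases h0 : E 0 with
  | keep => exact absurd h0 h
  | del =>
    have hkeep : ∀ i ≤ 0, E (i + 1) = keep := fun i hi =>
      hE.keep_after_del 0 (i + 1) h0 (by omega) (by omega)
    rw [apply, List.nil_append, getElem?_applyEdits_of_keep hkeep]
    simpa [eq_comm] using hE.del_boundary 0 h0
  | ins s => simpa [apply, eq_comm] using hE.ins_ne 0 s h0

end IsSparseEdit

lemma isAlternating_cons_take {q c : ℕ} {y s : Fin q} {x : List (Fin q)} (hys : y ≠ s)
    (h : ∀ j ≤ c, x[j]? = (s :: y :: x)[j]?) : IsAlternating ((y :: x).take (c + 2)) := by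
  refine ⟨y, s, hys, fun i hi => ?_⟩
  rw [List.length_take] at hi
  rw [List.getElem?_take_of_lt (by omega)]
  have key : ∀ i ≤ c + 1, (y :: x)[i]? = some (if i % 2 = 0 then y else s) := by
    intro i
    induction i using Nat.twoStepInduction with
    | zero => simp
    | one => intro hi; simpa using h 0 (by omega)
    | more i ih _ =>
      intro hi
      rw [List.getElem?_cons_succ, h (i + 1) (by omega), List.getElem?_cons_succ,
        ih (by omega)]
      simp
  exact key i (by omega)

/-- Deleting `y` and inserting `s` in front of `y` leave outputs that agree on `c + 1` symbols,
which makes `y :: x` start with an alternating word of length `c + 2`. -/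
lemma applyEdits_ne_of_del_of_ins {q c : ℕ} {y s : Fin q} {x : List (Fin q)}
    {E E' : ℕ → Edit (Fin q)}
    (hc : ∀ w : List (Fin q), w.IsInfix (y :: x) → IsAlternating w → w.length ≤ c)
    (hE : IsSparseEdit c (y :: x) E) (hE' : IsSparseEdit c (y :: x) E')
    (hd : E 0 = del) (hins : E' 0 = ins s) :
    applyEdits (y :: x) E ≠ applyEdits (y :: x) E' := by
  intro heq
  rw [applyEdits_cons, applyEdits_cons, hd, hins, apply, apply, List.nil_append] at heq
  have hshift : ∀ j ≤ c, x[j]? = (s :: y :: x)[j]? := by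
    intro j hj
    have hl := getElem?_applyEdits_of_keep (j := j)
      (fun i hi => hE.keep_after_del 0 (i + 1) hd (by omega) (by omega)) x
    rw [heq] at hl
    rw [← hl]
    match j, hj with
    | 0, _ => rfl
    | 1, _ => rfl
    | j + 2, hj =>
      simpa using getElem?_applyEdits_of_keep (j := j)
        (fun i hi => hE'.keep_after_ins 0 (i + 1) s hins (by omega) (by omega)) x
  have hys : y ≠ s := by simpa [hshift 0 (Nat.zero_le c)] using hE.del_boundary 0 hd
  have hlen := hc _ (List.take_prefix _ _).isInfix (isAlternating_cons_take hys hshift)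
  have hroom := hE.room 0 (by simp [hd])
  simp only [List.length_take] at hlen
  omega

lemma IsSparseEdit.eq_zero_of_applyEdits_eq {q c : ℕ} {y : Fin q} {x : List (Fin q)}
    {E E' : ℕ → Edit (Fin q)}
    (hc : ∀ w : List (Fin q), w.IsInfix (y :: x) → IsAlternating w → w.length ≤ c)
    (hE : IsSparseEdit c (y :: x) E) (hE' : IsSparseEdit c (y :: x) E')
    (heq : applyEdits (y :: x) E = applyEdits (y :: x) E') : E 0 = E' 0 := by
  have head_of_keep : ∀ F : ℕ → Edit (Fin q), F 0 = keep →
      (applyEdits (y :: x) F)[0]? = some y := fun F hF => by rw [applyEdits_cons, hF]; rfl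
  cases h : E 0 <;> cases h' : E' 0
  case keep.keep | del.del => rfl
  case keep.del | keep.ins =>
    exact absurd (heq ▸ head_of_keep E h) (hE'.getElem?_zero_ne (by simp [h']))
  case del.keep | ins.keep =>
    exact absurd (heq ▸ head_of_keep E' h') (hE.getElem?_zero_ne (by simp [h]))
  case del.ins => exact absurd heq (applyEdits_ne_of_del_of_ins hc hE hE' h h')
  case ins.del => exact absurd heq.symm (applyEdits_ne_of_del_of_ins hc hE' hE h' h)
  case ins.ins s s' =>
    have := congrArg (·[0]?) heq
    simp only [applyEdits_cons, h, h', apply] at this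
    simpa using this

theorem IsSparseEdit.eq_of_applyEdits_eq {q c : ℕ} {x : List (Fin q)}
    {E E' : ℕ → Edit (Fin q)}
    (hc : ∀ w : List (Fin q), w.IsInfix x → IsAlternating w → w.length ≤ c)
    (hE : IsSparseEdit c x E) (hE' : IsSparseEdit c x E')
    (heq : applyEdits x E = applyEdits x E') : E = E' := by
  induction x generalizing E E' with
  | nil => funext i; rw [hE.eq_keep_of_nil, hE'.eq_keep_of_nil]
  | cons y x ih =>
    have h0 := hE.eq_zero_of_applyEdits_eq hc hE' heq
    have htail := ih (fun w hw => hc w (hw.trans (List.suffix_cons y x).isInfix))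
      hE.tail hE'.tail
      (by rw [applyEdits_cons, applyEdits_cons, h0] at heq; exact List.append_cancel_left heq)
    funext i
    cases i with
    | zero => exact h0
    | succ i => exact congrFun htail i

lemma notMem_range_of_spaced {m g : ℕ} {f : Fin m → ℕ}
    (hf : ∀ j j', j < j' → f j + g ≤ f j')
    {j : Fin m} {v : ℕ} (h1 : f j < v) (h2 : v < f j + g) : v ∉ Set.range f := by
  rintro ⟨j', rfl⟩
  rcases lt_trichotomy j j' with h | rfl | h
  · have := hf j j' h; omega
  · omega
  · have := hf j' j h; omega

section EditOf

variable {a b : ℕ} (d : Fin a → ℕ) (e : Fin b → ℕ) (s : Fin b → α)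

noncomputable def editOf (i : ℕ) : Edit α :=
  open Classical in
  if i ∈ Set.range d then del else if h : ∃ j, e j = i then ins (s h.choose) else keep

variable {d e s}

lemma editOf_eq_del_iff {i : ℕ} : editOf d e s i = del ↔ i ∈ Set.range d := by
  unfold editOf
  split_ifs <;> simp_all

lemma editOf_eq_keep_iff {i : ℕ} :
    editOf d e s i = keep ↔ i ∉ Set.range d ∧ i ∉ Set.range e := by
  unfold editOf
  split_ifs <;> simp_all

lemma editOf_eq_ins {i : ℕ} {t : α} (h : editOf d e s i = ins t) :
    ∃ j, e j = i ∧ s j = t := by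
  unfold editOf at h
  split_ifs at h with hd he
  exact ⟨he.choose, he.choose_spec, ins.inj h⟩

lemma editOf_apply_right (he : e.Injective) (hde : ∀ j j', d j ≠ e j') (j : Fin b) :
    editOf d e s (e j) = ins (s j) := by
  have hex : ∃ j', e j' = e j := ⟨j, rfl⟩
  rw [editOf, if_neg (by rintro ⟨j', hj'⟩; exact hde j' j hj'), dif_pos hex,
    he hex.choose_spec]

lemma mem_range_right_iff_editOf (hde : ∀ j j', d j ≠ e j') {i : ℕ} :
    i ∈ Set.range e ↔ editOf d e s i ≠ keep ∧ editOf d e s i ≠ del := by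
  rw [Ne, Ne, editOf_eq_keep_iff, editOf_eq_del_iff]
  constructor
  · rintro ⟨j', rfl⟩
    have : e j' ∉ Set.range d := by rintro ⟨j, hj⟩; exact hde j j' hj
    tauto
  · tauto

lemma len_editOf_add (he : e.Injective) (hde : ∀ j j', d j ≠ e j') (i : ℕ) :
    (editOf d e s i).len + (if i ∈ Finset.univ.image d then 1 else 0) =
      1 + (if i ∈ Finset.univ.image e then 1 else 0) := by
  simp only [Finset.mem_image, Finset.mem_univ, true_and]
  by_cases hd : ∃ j, d j = i
  · have hne : ¬∃ j, e j = i := by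
      rintro ⟨j', rfl⟩
      obtain ⟨j, hj⟩ := hd
      exact hde j j' hj
    rw [editOf_eq_del_iff.mpr hd, if_pos hd, if_neg hne]; rfl
  · by_cases he' : ∃ j, e j = i
    · obtain ⟨j, rfl⟩ := he'
      rw [editOf_apply_right he hde, if_neg hd, if_pos ⟨j, rfl⟩]; rfl
    · rw [editOf_eq_keep_iff.mpr ⟨hd, he'⟩, if_neg hd, if_neg he']; rfl

lemma len_dropIns_editOf_add (i : ℕ) :
    (editOf d e s i).dropIns.len + (if i ∈ Finset.univ.image d then 1 else 0) =
      1 + (if i ∈ (∅ : Finset ℕ) then 1 else 0) := by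
  simp only [Finset.mem_image, Finset.mem_univ, true_and, Finset.notMem_empty, if_false]
  by_cases hd : ∃ j, d j = i
  · rw [editOf_eq_del_iff.mpr hd, if_pos hd]; rfl
  · rw [if_neg hd]
    have : editOf d e s i ≠ del := fun h => hd (editOf_eq_del_iff.mp h)
    cases h : editOf d e s i <;> simp_all [dropIns, len]

lemma mem_sSet_applyEdits_editOf {q : ℕ} {x : List (Fin q)} {s : Fin b → Fin q}
    (hd : d.Injective) (he : e.Injective) (hde : ∀ j j', d j ≠ e j')
    (hd_lt : ∀ j, d j < x.length) (he_lt : ∀ j, e j < x.length) :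
    applyEdits x (editOf d e s) ∈ sSet q x.length a b x := by
  have hsub : ∀ {m} (f : Fin m → ℕ), (∀ j, f j < x.length) →
      Finset.univ.image f ⊆ Finset.range x.length := fun f hf => by
    intro i hi
    obtain ⟨j, -, rfl⟩ := Finset.mem_image.mp hi
    exact Finset.mem_range.mpr (hf j)
  have hw := length_applyEdits_add_card (hsub d hd_lt) (hsub e he_lt)
    (len_editOf_add (s := s) he hde)
  have hz := length_applyEdits_add_card (hsub d hd_lt) (Finset.empty_subset _)
    (len_dropIns_editOf_add (e := e) (s := s))
  simp only [Finset.card_image_of_injective _ hd, Finset.card_image_of_injective _ he,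
    Finset.card_univ, Fintype.card_fin, Finset.card_empty] at hw hz
  refine ⟨by omega, _, by omega, ?_,
    applyEdits_sublist_applyEdits (fun i => dropIns_apply_sublist _) x⟩
  simpa [applyEdits_keep] using
    applyEdits_sublist_applyEdits (E' := fun _ => keep) (fun i => dropIns_apply_sublist_keep _) x

lemma editOf_injective {d' : Fin a → ℕ} {e' : Fin b → ℕ} {s' : Fin b → α}
    (hd : StrictMono d) (hd' : StrictMono d') (he : StrictMono e) (he' : StrictMono e')
    (hde : ∀ j j', d j ≠ e j') (hde' : ∀ j j', d' j ≠ e' j')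
    (h : editOf d e s = editOf d' e' s') : d = d' ∧ e = e' ∧ s = s' := by
  obtain rfl : d = d' := (hd.range_inj hd').mp <| Set.ext fun i => by
    rw [← editOf_eq_del_iff, h, editOf_eq_del_iff]
  obtain rfl : e = e' := (he.range_inj he').mp <| Set.ext fun i => by
    rw [mem_range_right_iff_editOf hde, h, mem_range_right_iff_editOf hde']
  refine ⟨rfl, rfl, funext fun j => ?_⟩
  have := congrFun h (e j)
  rwa [editOf_apply_right he.injective hde, editOf_apply_right he.injective hde',
    ins.injEq] at this

lemma isSparseEdit_editOf {c : ℕ} {x : List α}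
    (hd_gap : ∀ j j', j < j' → d j + (c + 2) ≤ d j')
    (he_gap : ∀ j j', j < j' → e j + (c + 1) ≤ e j')
    (hde : ∀ j j', e j' + c + 1 ≤ d j ∨ d j + c + 2 ≤ e j')
    (hd_bdry : ∀ j, x[d j]? ≠ x[d j + 1]?) (hs : ∀ j, x[e j]? ≠ some (s j))
    (hd_room : ∀ j, d j + c + 2 ≤ x.length) (he_room : ∀ j, e j + c + 2 ≤ x.length) :
    IsSparseEdit c x (editOf d e s) where
  del_boundary i h := by
    obtain ⟨j, rfl⟩ := editOf_eq_del_iff.mp h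
    exact hd_bdry j
  ins_ne i t h := by
    obtain ⟨j, rfl, rfl⟩ := editOf_eq_ins h
    exact hs j
  room i h := by
    rw [Ne, editOf_eq_keep_iff, not_and_or, not_not, not_not] at h
    rcases h with ⟨j, rfl⟩ | ⟨j, rfl⟩
    · exact hd_room j
    · exact he_room j
  keep_after_del i i' h hii' hi' := by
    obtain ⟨j, rfl⟩ := editOf_eq_del_iff.mp h
    refine editOf_eq_keep_iff.mpr ⟨notMem_range_of_spaced hd_gap hii' (by omega), ?_⟩
    rintro ⟨j', rfl⟩
    have := hde j j'
    omega
  keep_after_ins i i' t h hii' hi' := by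
    obtain ⟨j, rfl, -⟩ := editOf_eq_ins h
    refine editOf_eq_keep_iff.mpr ⟨?_, notMem_range_of_spaced he_gap hii' (by omega)⟩
    rintro ⟨j', rfl⟩
    have := hde j' j
    omega

end EditOf

lemma strictMono_of_add_le {m g : ℕ} {u : Fin m → ℕ}
    (hu : ∀ {j j'}, j < j' → u j + (g + 1) ≤ u j') : StrictMono u :=
  fun _ _ h => by have := hu h; omega

namespace Nat

variable {p : ℕ → Prop}

lemma nth_add_sub_le_nth {k k' : ℕ} (hkk' : k ≤ k')
    (h : ∀ hf : (Set.ofPred p).Finite, k' < hf.toFinset.card) :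
    nth p k + (k' - k) ≤ nth p k' := by
  obtain ⟨t, rfl⟩ := Nat.exists_eq_add_of_le hkk'
  induction t with
  | zero => simp
  | succ t ih =>
    have hlt := nth_lt_nth' (p := p) (show k + t < k + (t + 1) by omega) h
    have := ih (by omega) fun hf => (lt_add_one _).trans (h hf)
    omega

lemma lt_card_of_lt_count [DecidablePred p] {m n : ℕ} (h : m < count p n) :
    ∀ hf : (Set.ofPred p).Finite, m < hf.toFinset.card :=
  fun hf => h.trans_le (count_le_card hf n)

lemma infinite_of_forall_notMem (S : Finset ℕ) (hS : ∀ v ∉ S, p v) :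
    (Set.ofPred p).Infinite :=
  S.finite_toSet.infinite_compl.mono fun v hv => hS v hv

lemma nth_le_add_card_of_forall_notMem [DecidablePred p] (S : Finset ℕ) (hS : ∀ v ∉ S, p v)
    (v : ℕ) : nth p v ≤ v + S.card := by
  have hcount : v + S.card + 1 - S.card ≤ count p (v + S.card + 1) := by
    rw [count_eq_card_filter_range]
    calc v + S.card + 1 - S.card = (Finset.range (v + S.card + 1)).card - S.card := by simp
      _ ≤ (Finset.range (v + S.card + 1) \ S).card := Finset.le_card_sdiff S _
      _ ≤ _ := Finset.card_le_card fun i hi => by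
        rw [Finset.mem_sdiff] at hi
        exact Finset.mem_filter.mpr ⟨hi.1, hS i hi.2⟩
  have := nth_lt_of_lt_count (p := p) (n := v + S.card + 1) (k := v) (by omega)
  omega

end Nat

abbrev IsRunBoundary (x : List α) (i : ℕ) : Prop := x[i]? ≠ x[i + 1]?

/-- The last position of a nonempty word is a run boundary too (`x[x.length]? = none`); counting
below `x.length - 1` leaves it out. -/
lemma count_isRunBoundary {q : ℕ} (x : List (Fin q)) :
    Nat.count (IsRunBoundary x) (x.length - 1) + 1 = numRuns x := by
  rw [numRuns, Nat.count_eq_card_filter_range, add_comm]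

section DeletionPositions

variable [DecidableEq α] {x : List α} {c a : ℕ} {A A' : Fin a → ℕ}

noncomputable def delPos (x : List α) (c : ℕ) (A : Fin a → ℕ) (j : Fin a) : ℕ :=
  Nat.nth (IsRunBoundary x) (A j + j * (c + 1))

variable (hA : ∀ j, A j + (j + 1) * (c + 1) < Nat.count (IsRunBoundary x) (x.length - 1))
include hA

lemma isRunBoundary_delPos (j : Fin a) : IsRunBoundary x (delPos x c A j) :=
  Nat.nth_mem _ (Nat.lt_card_of_lt_count (n := x.length - 1)
    (by have := hA j; rw [add_mul] at this; omega))

lemma delPos_add_lt_length (j : Fin a) : delPos x c A j + (c + 2) < x.length := by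
  have hj := hA j
  rw [add_mul, one_mul] at hj
  have hle := Nat.nth_add_sub_le_nth (p := IsRunBoundary x)
    (Nat.le_add_right (A j + j * (c + 1)) (c + 1))
    (Nat.lt_card_of_lt_count (n := x.length - 1) (by omega))
  have hlt := Nat.nth_lt_of_lt_count (p := IsRunBoundary x)
    (show A j + j * (c + 1) + (c + 1) < Nat.count _ (x.length - 1) by omega)
  unfold delPos
  omega

lemma delPos_add_le (hA_mono : StrictMono A) {j j' : Fin a} (hjj' : j < j') :
    delPos x c A j + (c + 2) ≤ delPos x c A j' := by
  have hA' := hA j'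
  have hmono := hA_mono hjj'
  have hmul : (j + 1) * (c + 1) ≤ j' * (c + 1) := Nat.mul_le_mul_right _ (by omega)
  rw [add_mul, one_mul] at hmul hA'
  have := Nat.nth_add_sub_le_nth (p := IsRunBoundary x)
    (show A j + j * (c + 1) ≤ A j' + j' * (c + 1) by omega)
    (Nat.lt_card_of_lt_count (n := x.length - 1) (by omega))
  unfold delPos
  omega

lemma strictMono_delPos (hA_mono : StrictMono A) : StrictMono (delPos x c A) :=
  strictMono_of_add_le (delPos_add_le hA hA_mono)

lemma eq_of_delPos_eq
    (hA' : ∀ j, A' j + (j + 1) * (c + 1) < Nat.count (IsRunBoundary x) (x.length - 1))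
    (h : delPos x c A = delPos x c A') : A = A' := by
  funext j
  have hcount := congrArg (Nat.count (IsRunBoundary x)) (congrFun h j)
  have h1 := hA j
  have h2 := hA' j
  rw [add_mul, one_mul] at h1 h2
  rw [delPos, delPos, Nat.count_nth (Nat.lt_card_of_lt_count (n := x.length - 1) (by omega)),
    Nat.count_nth (Nat.lt_card_of_lt_count (n := x.length - 1) (by omega))] at hcount
  omega

end DeletionPositions

section InsertionPositions

variable {c a b : ℕ} {d : Fin a → ℕ} {B B' : Fin b → ℕ}

abbrev IsFarFrom (c : ℕ) (d : Fin a → ℕ) (v : ℕ) : Prop :=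
  ∀ j, v + c + 1 ≤ d j ∨ d j + c + 2 ≤ v

noncomputable def insPos (c : ℕ) (d : Fin a → ℕ) (B : Fin b → ℕ) (j : Fin b) : ℕ :=
  Nat.nth (IsFarFrom c d) (B j + j * c)

lemma isFarFrom_of_notMem {v : ℕ}
    (hv : v ∉ Finset.univ.biUnion fun j => Finset.Ico (d j - c) (d j + c + 2)) :
    IsFarFrom c d v := by
  intro j
  simp only [Finset.mem_biUnion, Finset.mem_univ, Finset.mem_Ico, true_and, not_exists,
    not_and_or, not_le, not_lt] at hv
  have := hv j
  omega

lemma card_biUnion_Ico_le :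
    (Finset.univ.biUnion fun j => Finset.Ico (d j - c) (d j + c + 2)).card ≤ a * (2 * c + 2) := by
  refine Finset.card_biUnion_le.trans ?_
  calc ∑ j, (Finset.Ico (d j - c) (d j + c + 2)).card ≤ ∑ _j : Fin a, (2 * c + 2) :=
        Finset.sum_le_sum fun j _ => by rw [Nat.card_Ico]; omega
    _ = a * (2 * c + 2) := by simp

lemma infinite_isFarFrom : (Set.ofPred (IsFarFrom c d)).Infinite :=
  Nat.infinite_of_forall_notMem _ fun _ => isFarFrom_of_notMem

lemma isFarFrom_insPos (j : Fin b) : IsFarFrom c d (insPos c d B j) :=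
  Nat.nth_mem_of_infinite infinite_isFarFrom _

lemma ne_insPos (j : Fin a) (j' : Fin b) : d j ≠ insPos c d B j' := by
  have := isFarFrom_insPos (c := c) (d := d) (B := B) j' j
  omega

lemma insPos_le (j : Fin b) : insPos c d B j ≤ B j + j * c + a * (2 * c + 2) :=
  (Nat.nth_le_add_card_of_forall_notMem _ (fun _ => isFarFrom_of_notMem) _).trans
    (Nat.add_le_add_left card_biUnion_Ico_le _)

lemma insPos_add_le (hB : StrictMono B) {j j' : Fin b} (hjj' : j < j') :
    insPos c d B j + (c + 1) ≤ insPos c d B j' := by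
  have hmono := hB hjj'
  have hmul : (j + 1) * c ≤ j' * c := Nat.mul_le_mul_right _ (by omega)
  rw [add_mul, one_mul] at hmul
  have := Nat.nth_add_sub_le_nth (p := IsFarFrom c d)
    (show B j + j * c ≤ B j' + j' * c by omega) fun hf => absurd hf infinite_isFarFrom
  unfold insPos
  omega

lemma strictMono_insPos (hB : StrictMono B) : StrictMono (insPos c d B) :=
  strictMono_of_add_le (insPos_add_le hB)

lemma eq_of_insPos_eq (h : insPos c d B = insPos c d B') : B = B' := by
  funext j
  have := Nat.nth_injective infinite_isFarFrom (congrFun h j)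
  omega

end InsertionPositions

section Construction

variable {k c a b : ℕ} {x : List (Fin (k + 2))}

noncomputable def choiceEdit (x : List (Fin (k + 2))) (c : ℕ) (A : Fin a → ℕ)
    (B : Fin b → ℕ) (f : Fin b → Fin (k + 1)) : ℕ → Edit (Fin (k + 2)) :=
  editOf (delPos x c A) (insPos c (delPos x c A) B)
    fun j => (x.getD (insPos c (delPos x c A) B j) 0).succAbove (f j)

variable {A A' : Fin a → ℕ} {B B' : Fin b → ℕ} {f f' : Fin b → Fin (k + 1)}

lemma insPos_add_le_length {d : Fin a → ℕ}
    (hB : ∀ j, B j + j * c + a * (2 * c + 2) + c + 2 ≤ x.length) (j : Fin b) :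
    insPos c d B j + c + 2 ≤ x.length := by
  have := insPos_le (c := c) (d := d) (B := B) j
  have := hB j
  omega

lemma isSparseEdit_choiceEdit (hA_mono : StrictMono A)
    (hA : ∀ j, A j + (j + 1) * (c + 1) < Nat.count (IsRunBoundary x) (x.length - 1))
    (hB_mono : StrictMono B) (hB : ∀ j, B j + j * c + a * (2 * c + 2) + c + 2 ≤ x.length) :
    IsSparseEdit c x (choiceEdit x c A B f) := by
  refine isSparseEdit_editOf (fun _ _ h => delPos_add_le hA hA_mono h)
    (fun _ _ h => insPos_add_le hB_mono h)
    (fun j j' => isFarFrom_insPos j' j) (isRunBoundary_delPos hA) (fun j => ?_)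
    (fun j => (delPos_add_lt_length hA j).le) (insPos_add_le_length hB)
  have := insPos_add_le_length (d := delPos x c A) hB j
  rw [List.getD_eq_getElem?_getD, List.getElem?_eq_getElem (by omega)]
  simp

lemma applyEdits_choiceEdit_mem_sSet (hA_mono : StrictMono A)
    (hA : ∀ j, A j + (j + 1) * (c + 1) < Nat.count (IsRunBoundary x) (x.length - 1))
    (hB_mono : StrictMono B) (hB : ∀ j, B j + j * c + a * (2 * c + 2) + c + 2 ≤ x.length) :
    applyEdits x (choiceEdit x c A B f) ∈ sSet (k + 2) x.length a b x :=
  mem_sSet_applyEdits_editOf (strictMono_delPos hA hA_mono).injective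
    (strictMono_insPos hB_mono).injective ne_insPos
    (fun j => by have := delPos_add_lt_length hA j; omega)
    (fun j => by have := insPos_add_le_length (d := delPos x c A) hB j; omega)

lemma eq_of_choiceEdit_eq (hA_mono : StrictMono A) (hA'_mono : StrictMono A')
    (hA : ∀ j, A j + (j + 1) * (c + 1) < Nat.count (IsRunBoundary x) (x.length - 1))
    (hA' : ∀ j, A' j + (j + 1) * (c + 1) < Nat.count (IsRunBoundary x) (x.length - 1))
    (hB_mono : StrictMono B) (hB'_mono : StrictMono B')
    (h : choiceEdit x c A B f = choiceEdit x c A' B' f') : A = A' ∧ B = B' ∧ f = f' := by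
  obtain ⟨hd, he, hs⟩ := editOf_injective (strictMono_delPos hA hA_mono)
    (strictMono_delPos hA' hA'_mono) (strictMono_insPos hB_mono) (strictMono_insPos hB'_mono)
    ne_insPos ne_insPos h
  obtain rfl := eq_of_delPos_eq hA hA' hd
  obtain rfl := eq_of_insPos_eq he
  exact ⟨rfl, rfl, funext fun j => Fin.succAbove_right_injective (congrFun hs j)⟩

end Construction

section Counting

open Finset

variable {m N : ℕ}

noncomputable def enumSubset (A : powersetCard m (range N)) : Fin m → ℕ :=
  A.1.orderEmbOfFin (mem_powersetCard.mp A.2).2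

lemma strictMono_enumSubset (A : powersetCard m (range N)) : StrictMono (enumSubset A) :=
  (A.1.orderEmbOfFin _).strictMono

lemma enumSubset_lt (A : powersetCard m (range N)) (j : Fin m) : enumSubset A j < N :=
  mem_range.mp ((mem_powersetCard.mp A.2).1 (A.1.orderEmbOfFin_mem _ j))

lemma enumSubset_injective :
    Function.Injective (enumSubset : powersetCard m (range N) → Fin m → ℕ) :=
  fun A A' h => Subtype.ext <| by
    have := congrArg Set.range h
    simp only [enumSubset, range_orderEmbOfFin] at this
    exact_mod_cast this

lemma add_succ_mul_lt_sub_one {r a c i j : ℕ} (hi : i < r - a - 2 - (a + 1) * c) (hj : j < a) :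
    i + (j + 1) * (c + 1) < r - 1 := by
  have : (j + 1) * (c + 1) ≤ a * (c + 1) := Nat.mul_le_mul_right _ hj
  have e1 : (j + 1) * (c + 1) = j * c + j + c + 1 := by ring
  have e2 : a * (c + 1) = a * c + a := by ring
  have e3 : (a + 1) * c = a * c + c := by ring
  omega

lemma add_mul_add_le {n a b c i j : ℕ} (hi : i < n - 2 * a - 1 - (2 * a + b + 1) * c)
    (hj : j < b) : i + j * c + a * (2 * c + 2) + c + 2 ≤ n := by
  have : (j + 1) * c ≤ b * c := Nat.mul_le_mul_right _ hj
  have e1 : (j + 1) * c = j * c + c := by ring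
  have e2 : (2 * a + b + 1) * c = 2 * (a * c) + b * c + c := by ring
  have e3 : a * (2 * c + 2) = 2 * (a * c) + 2 * a := by ring
  omega

theorem choose_mul_choose_mul_pow_le_ncard_sSet {k c a b : ℕ} (x : List (Fin (k + 2)))
    (hc : ∀ w : List (Fin (k + 2)), w.IsInfix x → IsAlternating w → w.length ≤ c) :
    (numRuns x - a - 2 - (a + 1) * c).choose a *
        (x.length - 2 * a - 1 - (2 * a + b + 1) * c).choose b * (k + 1) ^ b ≤
      (sSet (k + 2) x.length a b x).ncard := by
  set NA := numRuns x - a - 2 - (a + 1) * c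
  set NB := x.length - 2 * a - 1 - (2 * a + b + 1) * c
  have hA (A : powersetCard a (range NA)) (j : Fin a) :
      enumSubset A j + (j + 1) * (c + 1) < Nat.count (IsRunBoundary x) (x.length - 1) := by
    have := add_succ_mul_lt_sub_one (r := numRuns x) (enumSubset_lt A j) j.2
    have := count_isRunBoundary x
    omega
  have hB (B : powersetCard b (range NB)) (j : Fin b) :=
    add_mul_add_le (enumSubset_lt B j) j.2
  let F : powersetCard a (range NA) × powersetCard b (range NB) × (Fin b → Fin (k + 1)) →
      sSet (k + 2) x.length a b x := fun t =>
    ⟨_, applyEdits_choiceEdit_mem_sSet (f := t.2.2) (strictMono_enumSubset t.1) (hA t.1)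
      (strictMono_enumSubset t.2.1) (hB t.2.1)⟩
  have hF : F.Injective := by
    rintro ⟨A, B, f⟩ ⟨A', B', f'⟩ h
    have hE := IsSparseEdit.eq_of_applyEdits_eq hc
      (isSparseEdit_choiceEdit (f := f) (strictMono_enumSubset A) (hA A)
        (strictMono_enumSubset B) (hB B))
      (isSparseEdit_choiceEdit (f := f') (strictMono_enumSubset A') (hA A')
        (strictMono_enumSubset B') (hB B'))
      (congrArg Subtype.val h)
    obtain ⟨hAA', hBB', rfl⟩ := eq_of_choiceEdit_eq (strictMono_enumSubset A)
      (strictMono_enumSubset A') (hA A) (hA A') (strictMono_enumSubset B)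
      (strictMono_enumSubset B') hE
    rw [enumSubset_injective hAA', enumSubset_injective hBB']
  have : Finite (sSet (k + 2) x.length a b x) :=
    ((List.finite_length_eq (Fin (k + 2)) _).subset fun w hw => hw.1).to_subtype
  calc _ = Nat.card (powersetCard a (range NA) × powersetCard b (range NB) ×
        (Fin b → Fin (k + 1))) := by
        simp only [Nat.card_eq_fintype_card, Fintype.card_prod, Fintype.card_coe,
          card_powersetCard, card_range, Fintype.card_fun, Fintype.card_fin, mul_assoc]
    _ ≤ _ := Nat.card_le_card_of_injective F hF
    _ = _ := Nat.card_coe_set_eq _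

end Counting

/-- if x is a q-ary string of length n with exactly r runs whose alternating
infixes all have length at most c, then
|S_{a,b}(x)| ≥ C(r - a - 2 - (a+1)c, a) · C(n - 2a - 1 - (2a+b+1)c, b) · (q-1)^b,
with truncated natural subtraction. -/
theorem stmt_8 (q n r c a b : ℕ) (hq : 2 ≤ q) (x : List (Fin q)) (hx : x.length = n)
    (hr : numRuns x = r)
    (hc : ∀ w : List (Fin q), w.IsInfix x → IsAlternating w → w.length ≤ c) :
    (r - a - 2 - (a + 1) * c).choose a * (n - 2 * a - 1 - (2 * a + b + 1) * c).choose b *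
        (q - 1) ^ b ≤ (sSet q n a b x).ncard := by
  obtain ⟨k, rfl⟩ : ∃ k, q = k + 2 := ⟨q - 2, by omega⟩
  subst hx hr
  exact choose_mul_choose_mul_pow_le_ncard_sSet x hc
end

section
/- Let q ≥ 1 and let n, r be natural numbers with 1 ≤ r ≤ n. The number of q-ary strings of length n with exactly r runs equals q · C(n-1, r-1) · (q-1)^{r-1}. -/
open Finset

section HammingWeight

variable {ι β : Type*} [Fintype ι] [DecidableEq ι] [Fintype β] [DecidableEq β] [Zero β]

lemma card_filter_support_eq (s : Finset ι) :
    #{d : ι → β | ({i | d i ≠ 0} : Finset ι) = s} = (Fintype.card β - 1) ^ #s := by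
  have hpi : ({d : ι → β | ({i | d i ≠ 0} : Finset ι) = s} : Finset _) =
      Fintype.piFinset fun i => if i ∈ s then {0}ᶜ else {0} := by
    ext d
    simp only [mem_filter, mem_univ, true_and, Fintype.mem_piFinset, Finset.ext_iff]
    refine forall_congr' fun i => ?_
    split_ifs with hi <;> simp [hi]
  rw [hpi, Fintype.card_piFinset]
  simp only [apply_ite Finset.card, card_compl, card_singleton]
  rw [prod_ite_mem, univ_inter, prod_const]

theorem card_filter_hammingNorm_eq (k : ℕ) :
    #{d : ι → β | hammingNorm d = k} = (Fintype.card ι).choose k * (Fintype.card β - 1) ^ k := by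
  have hmaps : Set.MapsTo (fun d : ι → β => ({i | d i ≠ 0} : Finset ι))
      ↑({d | hammingNorm d = k} : Finset (ι → β)) ↑(powersetCard k (univ : Finset ι)) := by
    intro d hd
    simpa [mem_powersetCard, hammingNorm] using hd
  rw [card_eq_sum_card_fiberwise hmaps, sum_congr rfl fun s hs => ?_, sum_const,
    card_powersetCard, card_univ, smul_eq_mul]
  rw [filter_filter, ← (mem_powersetCard.1 hs).2, ← card_filter_support_eq s]
  congr 1
  refine filter_congr fun d _ => ⟨And.right, fun h => ⟨?_, h⟩⟩
  rw [hammingNorm, h]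

end HammingWeight

section Differences

variable {G : Type*} [AddGroup G] {m : ℕ}

def finDiff (f : Fin (m + 1) → G) : G × (Fin m → G) :=
  (f 0, -Fin.init f + Fin.tail f)

lemma finDiff_injective : Function.Injective (finDiff (G := G) (m := m)) := by
  intro f g h
  obtain ⟨h0, hd⟩ := Prod.mk.inj h
  funext i
  induction i using Fin.induction with
  | zero => exact h0
  | succ i ih =>
    have := congrFun hd i
    simp only [Pi.add_apply, Pi.neg_apply, Fin.init, Fin.tail, ih] at this
    exact add_left_cancel this

lemma finDiff_bijective [Fintype G] : Function.Bijective (finDiff (G := G) (m := m)) :=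
  (Fintype.bijective_iff_injective_and_card _).2
    ⟨finDiff_injective, by simp [Fintype.card_prod, pow_succ']⟩

variable [DecidableEq G]

lemma hammingDist_init_tail (f : Fin (m + 1) → G) :
    hammingDist (Fin.init f) (Fin.tail f) = hammingNorm (finDiff f).2 :=
  hammingDist_eq_hammingNorm _ _

theorem card_filter_hammingDist_init_tail_eq [Fintype G] (k : ℕ) :
    #{f : Fin (m + 1) → G | hammingDist (Fin.init f) (Fin.tail f) = k} =
      Fintype.card G * (m.choose k * (Fintype.card G - 1) ^ k) := by
  rw [card_equiv (Equiv.ofBijective _ finDiff_bijective)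
      (t := univ ×ˢ ({d | hammingNorm d = k} : Finset (Fin m → G))),
    card_product, card_univ, card_filter_hammingNorm_eq, Fintype.card_fin]
  intro f
  simp [hammingDist_init_tail]

end Differences

lemma numRuns_ofFn {q m : ℕ} (f : Fin (m + 1) → Fin q) :
    numRuns (List.ofFn f) = 1 + hammingDist (Fin.init f) (Fin.tail f) := by
  rw [numRuns, List.length_ofFn, Nat.add_sub_cancel, ← Nat.Iio_eq_range,
    ← Fin.map_valEmbedding_univ, filter_map, card_map, hammingDist]
  congr 2
  ext i
  simp only [mem_filter, mem_univ, true_and, Function.comp_apply, Fin.valEmbedding_apply,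
    List.getElem?_ofFn, dif_pos (Nat.lt_succ_of_lt i.2), dif_pos (Nat.succ_lt_succ i.2),
    ne_eq, Option.some.injEq]
  rfl

lemma ncard_setOf_length_eq_and {α : Type*} [Fintype α] (n : ℕ) (p : List α → Prop)
    [DecidablePred p] :
    {x : List α | x.length = n ∧ p x}.ncard = #({f | p (List.ofFn f)} : Finset (Fin n → α)) := by
  have himage : {x : List α | x.length = n ∧ p x} =
      List.ofFn '' (({f | p (List.ofFn f)} : Finset (Fin n → α)) : Set (Fin n → α)) := by
    ext x
    simp only [Set.mem_ofPred_eq, coe_filter, mem_univ, true_and, Set.mem_image]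
    constructor
    · rintro ⟨rfl, hx⟩
      exact ⟨fun i => x[(i : ℕ)], by rwa [List.ofFn_getElem], List.ofFn_getElem⟩
    · rintro ⟨f, hf, rfl⟩
      exact ⟨List.length_ofFn, hf⟩
  rw [himage, Set.ncard_image_of_injective _ List.ofFn_injective, Set.ncard_coe_finset]

/-- for q ≥ 1 and 1 ≤ r ≤ n, the number of q-ary strings of length n with
exactly r runs equals q · C(n-1, r-1) · (q-1)^{r-1}. -/
theorem stmt_10 (q n r : ℕ) (hq : 1 ≤ q) (hr : 1 ≤ r) (hrn : r ≤ n) :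
    {x : List (Fin q) | x.length = n ∧ numRuns x = r}.ncard =
      q * (n - 1).choose (r - 1) * (q - 1) ^ (r - 1) := by
  have : NeZero q := ⟨by omega⟩
  obtain ⟨m, rfl⟩ : ∃ m, n = m + 1 := ⟨n - 1, by omega⟩
  obtain ⟨k, rfl⟩ : ∃ k, r = k + 1 := ⟨r - 1, by omega⟩
  have hruns : ∀ f : Fin (m + 1) → Fin q,
      numRuns (List.ofFn f) = k + 1 ↔ hammingDist (Fin.init f) (Fin.tail f) = k := by
    intro f
    rw [numRuns_ofFn]
    omega
  simp only [ncard_setOf_length_eq_and, hruns, card_filter_hammingDist_init_tail_eq,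
    Fintype.card_fin, Nat.add_sub_cancel, mul_assoc]
end

section
/- Let q ≥ 2, let n ≥ 1, and let ε be a real number with ε ≥ 0. The number of q-ary strings x of length n whose number of runs is at most ((q-1)/q - ε)(n-1) + 1 is at most q^n · exp(-2(n-1)ε²) (as an inequality between real numbers). -/
/-!
Encode a string `x` of length `N + 1` by its first symbol and its `N` successive differences
`x (i + 1) - x i` in `Fin q`. The encoding is injective, and the runs of `x` after the first one
correspond to the nonzero differences, so it suffices to count difference vectors
`d : Fin N → Fin q` of small Hamming weight. The coordinates of a uniformly random `d` are
independently nonzero with probability `p = (q - 1) / q`; the exponential Markov (Chernoff)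
bound with parameter `t = 4ε`, combined with Hoeffding's lemma `1 - p + p e⁻ᵗ ≤ exp (-tp + t² / 8)`
for a Bernoulli variable, gives the factor `exp (-2 N ε²)`.
-/

open Real Finset ProbabilityTheory MeasureTheory

theorem one_sub_add_mul_exp_neg_le {p : ℝ} (hp0 : 0 ≤ p) (hp1 : p ≤ 1) (t : ℝ) :
    1 - p + p * exp (-t) ≤ exp (-(t * p) + t ^ 2 / 8) := by
  set μ : Measure ℝ := Ber(1, 0, ⟨p, hp0, hp1⟩)
  have hsupp : ∀ᵐ x ∂μ, x ∈ Set.Icc (0 : ℝ) 1 := by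
    rw [ae_iff]
    exact bernoulliMeasure_apply_of_notMem_of_notMem _ measurableSet_Icc.compl (by simp) (by simp)
  have hmgf : p * exp (-(t * (1 - p))) + (1 - p) * exp (t * p) ≤ exp (t ^ 2 / 8) := by
    have := (hasSubgaussianMGF_of_mem_Icc measurable_id.aemeasurable hsupp).mgf_le (-t)
    norm_num [μ, mgf, integral_bernoulliMeasure] at this
    exact this.trans_eq (by ring_nf)
  have h1 : exp (-(t * p)) * exp (-(t * (1 - p))) = exp (-t) := by rw [← exp_add]; ring_nf
  have h0 : exp (-(t * p)) * exp (t * p) = 1 := by rw [← exp_add, ← exp_zero]; ring_nf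
  calc 1 - p + p * exp (-t)
      = exp (-(t * p)) * (p * exp (-(t * (1 - p))) + (1 - p) * exp (t * p)) := by
        linear_combination -p * h1 - (1 - p) * h0
    _ ≤ exp (-(t * p)) * exp (t ^ 2 / 8) := by gcongr
    _ = exp (-(t * p) + t ^ 2 / 8) := (exp_add _ _).symm

theorem card_filter_le_le_sum_exp {β : Type*} (s : Finset β) (f : β → ℝ) (m : ℝ) {t : ℝ}
    (ht : 0 ≤ t) : (#{x ∈ s | f x ≤ m} : ℝ) ≤ ∑ x ∈ s, exp (t * (m - f x)) := by
  rw [card_filter, Nat.cast_sum]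
  refine sum_le_sum fun x _ => ?_
  split_ifs with h
  · exact_mod_cast one_le_exp (mul_nonneg ht (sub_nonneg.2 h))
  · exact_mod_cast (exp_pos _).le

section Hamming

variable {ι α : Type*} [Fintype ι] [DecidableEq ι] [Fintype α] [DecidableEq α] [Zero α]

theorem sum_pow_hammingNorm (z : ℝ) :
    ∑ d : ι → α, z ^ hammingNorm d = (1 + (Fintype.card α - 1) * z) ^ Fintype.card ι := by
  have hterm (d : ι → α) : z ^ hammingNorm d = ∏ i, if d i ≠ 0 then z else 1 := by
    rw [prod_ite, prod_const, prod_const_one, mul_one, hammingNorm]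
  have hsum : ∑ c : α, (if c ≠ 0 then z else 1) = 1 + (Fintype.card α - 1) * z := by
    rw [sum_ite, sum_const, sum_const, filter_ne', card_erase_of_mem (mem_univ _), card_univ]
    simp only [nsmul_eq_mul, Nat.cast_pred Fintype.card_pos, ne_eq, Decidable.not_not, filter_eq',
      mem_univ, ↓reduceIte, card_singleton, one_smul]
    ring
  rw [← hsum, ← card_univ, ← prod_const, Fintype.prod_sum]
  simp_rw [hterm]

theorem card_low_hammingNorm_le {ε : ℝ} (hε : 0 ≤ ε) :
    (#{d : ι → α | (hammingNorm d : ℝ) ≤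
        ((Fintype.card α - 1) / Fintype.card α - ε) * Fintype.card ι} : ℝ) ≤
      Fintype.card α ^ Fintype.card ι * exp (-2 * Fintype.card ι * ε ^ 2) := by
  set q : ℝ := (Fintype.card α : ℝ)
  set N := Fintype.card ι
  set p := (q - 1) / q
  have hq : 0 < q := by simp [q, Fintype.card_pos]
  have hp0 : 0 ≤ p := div_nonneg (by simp [q, Nat.one_le_cast.2 Fintype.card_pos]) hq.le
  have hp1 : p ≤ 1 := div_le_one_of_le₀ (by linarith) hq.le
  have hbase : 1 + (q - 1) * exp (-(4 * ε)) = q * (1 - p + p * exp (-(4 * ε))) := by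
    simp only [p]; field_simp; ring
  -- `t = 4ε` minimizes the resulting exponent `N (-t ε + t² / 8)`.
  calc (#{d : ι → α | (hammingNorm d : ℝ) ≤ (p - ε) * N} : ℝ)
      ≤ ∑ d : ι → α, exp (4 * ε * ((p - ε) * N - hammingNorm d)) :=
        card_filter_le_le_sum_exp _ _ _ (by positivity)
    _ = exp (4 * ε * (p - ε) * N) * (1 + (q - 1) * exp (-(4 * ε))) ^ N := by
        rw [← sum_pow_hammingNorm, mul_sum]
        refine sum_congr rfl fun d _ => ?_
        rw [← exp_nat_mul, ← exp_add]
        ring_nf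
    _ ≤ exp (4 * ε * (p - ε) * N) * (q * exp (-(4 * ε * p) + (4 * ε) ^ 2 / 8)) ^ N := by
        rw [hbase]
        gcongr
        exact one_sub_add_mul_exp_neg_le hp0 hp1 _
    _ = q ^ N * exp (-2 * N * ε ^ 2) := by
        rw [mul_pow, ← exp_nat_mul, mul_left_comm, ← exp_add]
        ring_nf

end Hamming

section Strings

variable {q : ℕ} [NeZero q]

def differenceCode (N : ℕ) (x : List (Fin q)) : Fin q × (Fin N → Fin q) :=
  (x.getD 0 0, fun i => x.getD (i + 1) 0 - x.getD i 0)

theorem numRuns_eq_one_add_hammingNorm {N : ℕ} {x : List (Fin q)} (hx : x.length = N + 1) :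
    numRuns x = 1 + hammingNorm (differenceCode N x).2 := by
  have hbreak (i : Fin N) : x[(i : ℕ)]? ≠ x[(i : ℕ) + 1]? ↔ (differenceCode N x).2 i ≠ 0 := by
    have hi : (i : ℕ) + 1 < x.length := by omega
    dsimp only [differenceCode]
    rw [List.getElem?_eq_getElem hi, List.getElem?_eq_getElem (by omega),
      List.getD_eq_getElem _ _ hi, List.getD_eq_getElem _ _ (by omega), ne_eq, Option.some_inj,
      ← ne_eq, sub_ne_zero, ne_comm]
  rw [numRuns, hammingNorm, hx, Nat.add_sub_cancel, ← Nat.Iio_eq_range,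
    ← Fin.map_valEmbedding_univ, filter_map, card_map]
  exact congrArg (1 + #·) (filter_congr fun i _ => hbreak i)

theorem injOn_differenceCode (N : ℕ) :
    Set.InjOn (differenceCode (q := q) N) {x | x.length = N + 1} := by
  intro x (hx : x.length = N + 1) y (hy : y.length = N + 1) hxy
  simp only [differenceCode, Prod.mk.injEq, funext_iff] at hxy
  obtain ⟨h0, hdiff⟩ := hxy
  have hget (j : ℕ) (hj : j ≤ N) : x.getD j 0 = y.getD j 0 := by
    induction j with
    | zero => exact h0
    | succ j ih =>
      have := hdiff ⟨j, hj⟩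
      rw [ih (by omega)] at this
      exact sub_left_injective this
  refine List.ext_getElem (hx.trans hy.symm) fun j hjx hjy => ?_
  rw [← List.getD_eq_getElem _ 0 hjx, ← List.getD_eq_getElem _ 0 hjy]
  exact hget j (by omega)

theorem ncard_numRuns_le (N : ℕ) (m : ℝ) :
    {x : List (Fin q) | x.length = N + 1 ∧ (numRuns x : ℝ) ≤ m + 1}.ncard ≤
      q * #{d : Fin N → Fin q | (hammingNorm d : ℝ) ≤ m} := by
  calc _ ≤ (↑((univ : Finset (Fin q)) ×ˢ ({d | (hammingNorm d : ℝ) ≤ m} : Finset (Fin N → Fin q)))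
      : Set _).ncard :=
        Set.ncard_le_ncard_of_injOn (differenceCode N) ?_
          ((injOn_differenceCode N).mono fun x hx => hx.1) (finite_toSet _)
    _ = _ := by rw [Set.ncard_coe_finset, card_product, card_univ, Fintype.card_fin]
  rintro x ⟨hx, hruns⟩
  rw [numRuns_eq_one_add_hammingNorm hx] at hruns
  push_cast at hruns
  simpa using (by linarith : (hammingNorm (differenceCode N x).2 : ℝ) ≤ m)

end Strings

/-- for q ≥ 2, n ≥ 1 and ε ≥ 0, the number of q-ary strings of length n
with at most ((q-1)/q - ε)(n-1) + 1 runs is at most q^n · exp(-2(n-1)ε²). -/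
theorem stmt_11 (q n : ℕ) (hq : 2 ≤ q) (hn : 1 ≤ n) (ε : ℝ) (hε : 0 ≤ ε) :
    ({x : List (Fin q) | x.length = n ∧
        (numRuns x : ℝ) ≤ (((q : ℝ) - 1) / q - ε) * ((n : ℝ) - 1) + 1}.ncard : ℝ) ≤
      (q : ℝ) ^ n * Real.exp (-2 * ((n : ℝ) - 1) * ε ^ 2) := by
  obtain ⟨N, rfl⟩ := Nat.exists_eq_add_of_le' hn
  have : NeZero q := ⟨by omega⟩
  have hN : ((N + 1 : ℕ) : ℝ) - 1 = N := by push_cast; ring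
  rw [hN]
  calc _ ≤ (q : ℝ) * #{d : Fin N → Fin q | (hammingNorm d : ℝ) ≤ (((q : ℝ) - 1) / q - ε) * N} := by
        exact_mod_cast ncard_numRuns_le N _
    _ ≤ q * (q ^ N * exp (-2 * N * ε ^ 2)) := by
        gcongr
        simpa using card_low_hammingNorm_le (ι := Fin N) (α := Fin q) hε
    _ = q ^ (N + 1) * exp (-2 * N * ε ^ 2) := by ring
end

section
/- Let q ≥ 1 and s ≥ q be natural numbers and set b* = ⌈(s - q)/(q + 1)⌉. Then for every natural number b ≤ s, q^{b*} · C(s, b) ≤ q^b · C(s, b*); that is, the quantity q^b / C(s, b) over b ∈ {0, 1, …, s} is minimized at b = b*. -/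
/-!
Since `C(s, b + 1) / C(s, b) = (s - b) / (b + 1)`, this ratio is at least `q` exactly when
`(b + 1)(q + 1) ≤ s`. Hence `b ↦ C(s, b) / q ^ b` increases up to `⌊s / (q + 1)⌋` and decreases
afterwards, and `⌊s / (q + 1)⌋ = ⌈(s - q) / (q + 1)⌉`.
-/

theorem Nat.ceil_sub_div_succ_eq_div (q s : ℕ) :
    ⌈((s : ℚ) - q) / (q + 1)⌉₊ = s / (q + 1) := by
  have hq : (0 : ℚ) < q + 1 := by positivity
  apply le_antisymm
  · rw [Nat.ceil_le, div_le_iff₀ hq]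
    have hs : s < s / (q + 1) * (q + 1) + (q + 1) := Nat.lt_div_mul_add (by omega)
    generalize s / (q + 1) = c at hs ⊢
    have : (s : ℚ) ≤ c * (q + 1) + q := by exact_mod_cast (by omega : s ≤ c * (q + 1) + q)
    linarith
  · apply Nat.le_of_lt_succ
    apply Nat.div_lt_of_lt_mul
    have h := Nat.le_ceil (((s : ℚ) - q) / (q + 1))
    rw [div_le_iff₀ hq] at h
    have : (s : ℚ) < (q + 1) * (⌈((s : ℚ) - q) / (q + 1)⌉₊ + 1) := by linarith
    exact_mod_cast this

theorem Nat.mul_choose_le_choose_succ {q s b : ℕ} (h : (b + 1) * (q + 1) ≤ s) :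
    q * s.choose b ≤ s.choose (b + 1) := by
  have hb : q * (b + 1) ≤ s - b := by
    have : (b + 1) * (q + 1) = q * (b + 1) + (b + 1) := by ring
    omega
  refine Nat.le_of_mul_le_mul_right ?_ b.succ_pos
  calc q * s.choose b * (b + 1) = s.choose b * (q * (b + 1)) := by ring
    _ ≤ s.choose b * (s - b) := Nat.mul_le_mul_left _ hb
    _ = s.choose (b + 1) * (b + 1) := (Nat.choose_succ_right_eq s b).symm

theorem Nat.choose_succ_le_mul_choose {q s b : ℕ} (h : s ≤ b * (q + 1) + q) :
    s.choose (b + 1) ≤ q * s.choose b := by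
  have hb : s - b ≤ q * (b + 1) := by
    have : b * (q + 1) + q = q * (b + 1) + b := by ring
    omega
  refine Nat.le_of_mul_le_mul_right ?_ b.succ_pos
  calc s.choose (b + 1) * (b + 1) = s.choose b * (s - b) := Nat.choose_succ_right_eq s b
    _ ≤ s.choose b * (q * (b + 1)) := Nat.mul_le_mul_left _ hb
    _ = q * s.choose b * (b + 1) := by ring

section

variable {R : Type*} [CommSemiring R] [PartialOrder R] [IsOrderedRing R] {q : R} {g : ℕ → R}
  {c : ℕ}

theorem pow_sub_mul_le_of_mul_le_succ (hq : 0 ≤ q) (hup : ∀ b < c, q * g b ≤ g (b + 1))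
    {b : ℕ} (hb : b ≤ c) : q ^ (c - b) * g b ≤ g c := by
  suffices ∀ n, b ≤ n → n ≤ c → q ^ (n - b) * g b ≤ g n from this c hb le_rfl
  intro n hbn
  induction n, hbn using Nat.le_induction with
  | base => simp
  | succ n hbn ih =>
    intro hn
    calc q ^ (n + 1 - b) * g b = q * (q ^ (n - b) * g b) := by
          rw [Nat.sub_add_comm hbn, pow_succ]; ring
      _ ≤ q * g n := mul_le_mul_of_nonneg_left (ih (by omega)) hq
      _ ≤ g (n + 1) := hup n hn

theorem le_pow_sub_mul_of_succ_le_mul (hq : 0 ≤ q) (hdown : ∀ b, c ≤ b → g (b + 1) ≤ q * g b)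
    {b : ℕ} (hb : c ≤ b) : g b ≤ q ^ (b - c) * g c := by
  induction b, hb using Nat.le_induction with
  | base => simp
  | succ n hcn ih =>
    calc g (n + 1) ≤ q * g n := hdown n hcn
      _ ≤ q * (q ^ (n - c) * g c) := mul_le_mul_of_nonneg_left ih hq
      _ = q ^ (n + 1 - c) * g c := by rw [Nat.sub_add_comm hcn, pow_succ]; ring

theorem pow_mul_le_pow_mul_of_ratio (hq : 0 ≤ q) (hup : ∀ b < c, q * g b ≤ g (b + 1))
    (hdown : ∀ b, c ≤ b → g (b + 1) ≤ q * g b) (b : ℕ) : q ^ c * g b ≤ q ^ b * g c := by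
  rcases le_total b c with hbc | hcb
  · calc q ^ c * g b = q ^ b * (q ^ (c - b) * g b) := by
          rw [← mul_assoc, ← pow_add, Nat.add_sub_cancel' hbc]
      _ ≤ q ^ b * g c :=
          mul_le_mul_of_nonneg_left (pow_sub_mul_le_of_mul_le_succ hq hup hbc) (pow_nonneg hq b)
  · calc q ^ c * g b ≤ q ^ c * (q ^ (b - c) * g c) :=
          mul_le_mul_of_nonneg_left (le_pow_sub_mul_of_succ_le_mul hq hdown hcb) (pow_nonneg hq c)
      _ = q ^ b * g c := by rw [← mul_assoc, ← pow_add, Nat.add_sub_cancel' hcb]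

end

theorem stmt_15_general (q s : ℕ) :
    ∀ b ≤ s,
      q ^ (⌈((s : ℚ) - q) / ((q : ℚ) + 1)⌉₊) * s.choose b ≤
        q ^ b * s.choose (⌈((s : ℚ) - q) / ((q : ℚ) + 1)⌉₊) := by
  intro b _
  rw [Nat.ceil_sub_div_succ_eq_div]
  refine pow_mul_le_pow_mul_of_ratio (Nat.zero_le q) (fun b hb => ?_) (fun b hb => ?_) b
  · apply Nat.mul_choose_le_choose_succ
    calc (b + 1) * (q + 1) ≤ s / (q + 1) * (q + 1) := Nat.mul_le_mul_right _ hb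
      _ ≤ s := Nat.div_mul_le_self s (q + 1)
  · apply Nat.choose_succ_le_mul_choose
    have := Nat.lt_div_mul_add (a := s) (b := q + 1) (by omega)
    have := Nat.mul_le_mul_right (q + 1) hb
    omega

/-- for q ≥ 1, s ≥ q and b* = ⌈(s - q)/(q + 1)⌉, for every b ≤ s we have
q^{b*} · C(s, b) ≤ q^b · C(s, b*), i.e. q^b / C(s, b) over b ∈ {0, …, s} is minimized
at b = b*. -/
theorem stmt_15 (q s : ℕ) (hq : 1 ≤ q) (hs : q ≤ s) :
    ∀ b ≤ s,
      q ^ (⌈((s : ℚ) - q) / ((q : ℚ) + 1)⌉₊) * s.choose b ≤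
        q ^ b * s.choose (⌈((s : ℚ) - q) / ((q : ℚ) + 1)⌉₊) :=
  stmt_15_general q s
end

section
/- Fix natural numbers q ≥ 2 and s. Then the limit inferior as l → ∞ of the ratio (∑_{(c_0,…,c_s) ∈ M(s+1, l, 2)} ∏_{i=0}^{s} (q^{c_i} - q(q-1))) / (q^l · C(l, s)) is at least 1. -/
open Finset Filter Asymptotics Topology

lemma mem_compSet {t l k : ℕ} {c : Fin t → ℕ} :
    c ∈ compSet t l k ↔ ∑ i, c i = l ∧ ∀ i, k ≤ c i := by
  simp [compSet, Nat.mem_antidiagonalTuple]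

theorem Finset.Nat.card_antidiagonalTuple (t n : ℕ) :
    #(Nat.antidiagonalTuple t n) = (t + n - 1).choose n := by
  rw [card_eq_of_equiv_fintype ((Equiv.subtypeEquivRight fun _ => Nat.mem_antidiagonalTuple).trans
    (Sym.equivNatSumOfFintype (Fin t) n).symm), Sym.card_sym_eq_choose, Fintype.card_fin]

lemma card_compSet_mul_add (t k n : ℕ) :
    #(compSet t (t * k + n) k) = #(Nat.antidiagonalTuple t n) := by
  refine card_nbij' (fun c i => c i - k) (fun d i => d i + k) ?_ ?_ ?_ ?_
  · intro c hc
    rw [mem_coe, mem_compSet] at hc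
    rw [mem_coe, Nat.mem_antidiagonalTuple]
    change ∑ i, (c i - k) = n
    rw [sum_tsub_distrib _ fun i _ => hc.2 i, hc.1]
    simp
  · intro d hd
    rw [mem_coe, Nat.mem_antidiagonalTuple] at hd
    rw [mem_coe, mem_compSet]
    exact ⟨by simp [sum_add_distrib, hd, add_comm], fun i => Nat.le_add_left k (d i)⟩
  · intro c hc
    rw [mem_coe, mem_compSet] at hc
    funext i; simp [Nat.sub_add_cancel (hc.2 i)]
  · intro d _; funext i; simp

lemma compSet_eq_empty {t l k : ℕ} (h : l < t * k) : compSet t l k = ∅ := by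
  refine eq_empty_of_forall_notMem fun c hc => ?_
  rw [mem_compSet] at hc
  have : t * k ≤ l := by
    simpa [← hc.1, mul_comm] using sum_le_sum fun i (_ : i ∈ univ) => hc.2 i
  omega

lemma card_compSet {s l k : ℕ} (h : (s + 1) * k ≤ l) :
    #(compSet (s + 1) l k) = (l - (s + 1) * k + s).choose s := by
  obtain ⟨n, rfl⟩ := Nat.exists_eq_add_of_le h
  rw [card_compSet_mul_add, Nat.card_antidiagonalTuple, show s + 1 + n - 1 = n + s by omega,
    Nat.add_sub_cancel_left, Nat.choose_symm_add]

lemma compSet_subset_of_le {t l k m : ℕ} (h : k ≤ m) : compSet t l m ⊆ compSet t l k :=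
  fun _ hc => by
    rw [mem_compSet] at hc ⊢
    exact ⟨hc.1, fun i => h.trans (hc.2 i)⟩

lemma card_compSet_le_choose {s l k : ℕ} (hk : 1 ≤ k) : #(compSet (s + 1) l k) ≤ l.choose s := by
  rcases le_or_gt ((s + 1) * k) l with h | h
  · have : s + 1 ≤ (s + 1) * k := Nat.le_mul_of_pos_right _ hk
    rw [card_compSet h]
    exact Nat.choose_le_choose s (by omega)
  · simp [compSet_eq_empty h]

lemma prod_pow_sub_le {q t l k a : ℕ} {c : Fin t → ℕ} (hc : c ∈ compSet t l k) :
    ∏ i, (q ^ c i - a) ≤ q ^ l := by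
  rw [mem_compSet] at hc
  calc ∏ i, (q ^ c i - a) ≤ ∏ i, q ^ c i := prod_le_prod' fun i _ => Nat.sub_le _ _
    _ = q ^ l := by rw [prod_pow_eq_pow_sum, hc.1]

lemma sum_prod_pow_sub_le {q s l k a : ℕ} (hk : 1 ≤ k) :
    ∑ c ∈ compSet (s + 1) l k, ∏ i, (q ^ c i - a) ≤ l.choose s * q ^ l :=
  calc ∑ c ∈ compSet (s + 1) l k, ∏ i, (q ^ c i - a)
      ≤ #(compSet (s + 1) l k) * q ^ l := sum_le_card_nsmul _ _ _ fun _ hc => prod_pow_sub_le hc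
    _ ≤ l.choose s * q ^ l := Nat.mul_le_mul_right _ (card_compSet_le_choose hk)

lemma pow_mul_one_sub_div_le {Q a : ℝ} {m n : ℕ} (hQ : 1 ≤ Q) (ha : 0 ≤ a) (hmn : m ≤ n) :
    Q ^ n * (1 - a / Q ^ m) ≤ Q ^ n - a := by
  have h : 1 ≤ Q ^ n / Q ^ m := (one_le_div (by positivity)).2 (pow_le_pow_right₀ hQ hmn)
  calc Q ^ n * (1 - a / Q ^ m) = Q ^ n - a * (Q ^ n / Q ^ m) := by ring
    _ ≤ Q ^ n - a := sub_le_sub_left (le_mul_of_one_le_right ha h) _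

lemma pow_mul_one_sub_div_pow_le_prod {q t l m a : ℕ} (hq : 1 ≤ q) (ha : a ≤ q ^ m)
    {c : Fin t → ℕ} (hc : c ∈ compSet t l m) :
    (q : ℝ) ^ l * (1 - a / (q : ℝ) ^ m) ^ t ≤ ((∏ i, (q ^ c i - a) : ℕ) : ℝ) := by
  rw [mem_compSet] at hc
  have hq' : (1 : ℝ) ≤ q := by exact_mod_cast hq
  have ha_le : ∀ i, a ≤ q ^ c i := fun i => ha.trans (Nat.pow_le_pow_right hq (hc.2 i))
  have hr : 0 ≤ 1 - (a : ℝ) / (q : ℝ) ^ m := by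
    rw [sub_nonneg, div_le_one (by positivity)]
    exact_mod_cast ha
  calc (q : ℝ) ^ l * (1 - a / (q : ℝ) ^ m) ^ t
      = ∏ i, ((q : ℝ) ^ c i * (1 - a / (q : ℝ) ^ m)) := by
        rw [prod_mul_distrib, prod_pow_eq_pow_sum, hc.1, prod_const, card_univ, Fintype.card_fin]
    _ ≤ ∏ i, ((q : ℝ) ^ c i - a) := prod_le_prod (fun _ _ => by positivity)
        fun i _ => pow_mul_one_sub_div_le hq' (Nat.cast_nonneg a) (hc.2 i)
    _ = ((∏ i, (q ^ c i - a) : ℕ) : ℝ) := by push_cast [Nat.cast_sub (ha_le _)]; rfl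

lemma card_mul_le_sum_prod_pow_sub {q t l k m a : ℕ} (hq : 1 ≤ q) (hkm : k ≤ m) (ha : a ≤ q ^ m) :
    (#(compSet t l m) : ℝ) * (q : ℝ) ^ l * (1 - a / (q : ℝ) ^ m) ^ t
      ≤ ((∑ c ∈ compSet t l k, ∏ i, (q ^ c i - a) : ℕ) : ℝ) := by
  rw [mul_assoc, ← nsmul_eq_mul, Nat.cast_sum]
  calc _ ≤ ∑ c ∈ compSet t l m, ((∏ i, (q ^ c i - a) : ℕ) : ℝ) :=
        card_nsmul_le_sum _ _ _ fun _ hc => pow_mul_one_sub_div_pow_le_prod hq ha hc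
    _ ≤ _ := sum_le_sum_of_subset_of_nonneg (compSet_subset_of_le hkm) fun _ _ _ => by positivity

-- `liminf` in `ℝ` carries a junk value unless the sequence is bounded above.
lemma sum_prod_pow_sub_div_le_one {q s l k a : ℕ} (hk : 1 ≤ k) :
    ((∑ c ∈ compSet (s + 1) l k, ∏ i, (q ^ c i - a) : ℕ) : ℝ) / ((q : ℝ) ^ l * l.choose s) ≤ 1 := by
  refine div_le_one_of_le₀ ?_ (by positivity)
  rw [mul_comm]
  exact_mod_cast sum_prod_pow_sub_le hk

lemma choose_div_choose_mul_le_sum_prod_pow_sub_div {q s l k m a : ℕ} (hq : 1 ≤ q) (hkm : k ≤ m)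
    (ha : a ≤ q ^ m) (hl : (s + 1) * m ≤ l) :
    ((l - (s + 1) * m + s).choose s : ℝ) / l.choose s * (1 - a / (q : ℝ) ^ m) ^ (s + 1)
      ≤ ((∑ c ∈ compSet (s + 1) l k, ∏ i, (q ^ c i - a) : ℕ) : ℝ) / ((q : ℝ) ^ l * l.choose s) := by
  have h := card_mul_le_sum_prod_pow_sub (t := s + 1) (l := l) hq hkm ha
  rw [card_compSet hl] at h
  rw [div_mul_eq_mul_div, ← mul_div_mul_left _ _ (pow_ne_zero l (by positivity : (q : ℝ) ≠ 0))]
  exact div_le_div_of_nonneg_right (by linarith) (by positivity)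

lemma tendsto_one_sub_div_pow_pow {q : ℝ} (hq : 1 < q) (a : ℝ) (t : ℕ) :
    Tendsto (fun m : ℕ => (1 - a / q ^ m) ^ t) atTop (𝓝 1) := by
  have h : Tendsto (fun m : ℕ => a / q ^ m) atTop (𝓝 0) :=
    tendsto_const_nhds.div_atTop (tendsto_pow_atTop_atTop_of_one_lt hq)
  simpa using ((tendsto_const_nhds (x := (1 : ℝ))).sub h).pow t

lemma isEquivalent_choose_add (s a : ℕ) :
    (fun n : ℕ => ((n + a).choose s : ℝ)) ~[atTop] fun n => (n.choose s : ℝ) := by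
  have h : (fun n : ℕ => ((n + a : ℕ) : ℝ)) ~[atTop] fun n => (n : ℝ) := by
    push_cast
    exact IsEquivalent.refl.add_const_of_norm_tendsto_atTop
      (tendsto_norm_atTop_atTop.comp tendsto_natCast_atTop_atTop)
  exact ((isEquivalent_choose s).comp_tendsto (tendsto_add_atTop_nat a)).trans
    (((h.pow s).div IsEquivalent.refl).trans (isEquivalent_choose s).symm)

lemma tendsto_choose_sub_add_div_choose (s a b : ℕ) :
    Tendsto (fun l : ℕ => ((l - b + a).choose s : ℝ) / l.choose s) atTop (𝓝 1) := by
  rw [← tendsto_add_atTop_iff_nat b]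
  simp only [Nat.add_sub_cancel]
  have hz : ∀ᶠ n in atTop, ((n + b).choose s : ℝ) ≠ 0 :=
    eventually_ge_atTop s |>.mono fun n hn => Nat.cast_ne_zero.2 (Nat.choose_pos (by omega)).ne'
  exact (isEquivalent_iff_tendsto_one hz).1
    ((isEquivalent_choose_add s a).trans (isEquivalent_choose_add s b).symm)

/-- for fixed q ≥ 2 and s,
liminf_{l → ∞} (∑_{c ∈ M(s+1, l, 2)} ∏_{i=0}^{s} (q^{c_i} - q(q-1))) / (q^l · C(l, s)) ≥ 1. -/
theorem stmt_16 (q s : ℕ) (hq : 2 ≤ q) :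
    1 ≤ Filter.liminf
      (fun l : ℕ =>
        ((∑ c ∈ compSet (s + 1) l 2, ∏ i, (q ^ c i - q * (q - 1)) : ℕ) : ℝ) /
          ((q : ℝ) ^ l * l.choose s))
      Filter.atTop := by
  refine le_of_tendsto
    (tendsto_one_sub_div_pow_pow (Nat.one_lt_cast.2 hq) ((q * (q - 1) : ℕ) : ℝ) (s + 1))
    (eventually_atTop.2 ⟨2, fun m hm => ?_⟩)
  have ha : q * (q - 1) ≤ q ^ m :=
    calc q * (q - 1) ≤ q ^ 2 := by rw [sq]; exact Nat.mul_le_mul_left _ (Nat.sub_le _ _)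
      _ ≤ q ^ m := Nat.pow_le_pow_right (by omega) hm
  have hv := (tendsto_choose_sub_add_div_choose s s ((s + 1) * m)).mul_const
    ((1 - ((q * (q - 1) : ℕ) : ℝ) / (q : ℝ) ^ m) ^ (s + 1))
  rw [one_mul] at hv
  rw [← hv.liminf_eq]
  exact liminf_le_liminf ((eventually_ge_atTop _).mono fun l hl =>
    choose_div_choose_mul_le_sum_prod_pow_sub_div (by omega) hm ha hl) hv.isBoundedUnder_ge
    (isCoboundedUnder_ge_of_le atTop fun _ => sum_prod_pow_sub_div_le_one (by norm_num))
end
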